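/- arXiv:1811.12252 — 14 statements merged into one kernel-verified Lean document; each statement's English description precedes it below -/
import Mathlib

section
/- Every connected graph that has no induced subgraph isomorphic to the paw (the complement of P_1+P_3, i.e. a triangle with one pendant vertex attached) is either a complete multipartite graph or contains no induced K_3 (triangle). -/
open SimpleGraph

/-- The graph `2P_1 + P_3` on five vertices: vertices `0` and `1` are isolated and
`2 - 3 - 4` is a path on three vertices. -/
def twoP1PlusP3 : SimpleGraph (Fin 5) :=
  SimpleGraph.fromRel (fun a b => (a = 2 ∧ b = 3) ∨ (a = 3 ∧ b = 4))

/-- The complement of `2P_1 + P_3`, i.e. `K_5` minus the two edges of a `P_3`. -/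
def co2P1P3 : SimpleGraph (Fin 5) := twoP1PlusP3ᶜ

/-- The graph `P_1 + P_3`: an isolated vertex together with a path on three vertices. -/
def P1PlusP3 : SimpleGraph (Fin 4) :=
  SimpleGraph.fromRel (fun a b => (a = 1 ∧ b = 2) ∨ (a = 2 ∧ b = 3))

/-- The paw: the complement of `P_1 + P_3` (a triangle with a pendant vertex). -/
def paw : SimpleGraph (Fin 4) := P1PlusP3ᶜ

/-- The graph `P_2 + P_3`: disjoint union of a path on two vertices and a path on
three vertices. -/
def P2PlusP3 : SimpleGraph (Fin 5) :=
  SimpleGraph.fromRel (fun a b => (a = 0 ∧ b = 1) ∨ (a = 2 ∧ b = 3) ∨ (a = 3 ∧ b = 4))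

/-- The graph `2P_1 + P_2`. -/
def twoP1PlusP2 : SimpleGraph (Fin 4) :=
  SimpleGraph.fromRel (fun a b => a = 2 ∧ b = 3)

/-- The diamond: the complement of `2P_1 + P_2`, i.e. `K_4` minus an edge. -/
def diamond : SimpleGraph (Fin 4) := twoP1PlusP2ᶜ

/-- The graph `2P_3`: disjoint union of two paths on three vertices. -/
def twoP3 : SimpleGraph (Fin 6) :=
  SimpleGraph.fromRel
    (fun a b => (a = 0 ∧ b = 1) ∨ (a = 1 ∧ b = 2) ∨ (a = 3 ∧ b = 4) ∨ (a = 4 ∧ b = 5))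

/-- The graph `P_1 + P_4`. -/
def P1PlusP4 : SimpleGraph (Fin 5) :=
  SimpleGraph.fromRel (fun a b => (a = 1 ∧ b = 2) ∨ (a = 2 ∧ b = 3) ∨ (a = 3 ∧ b = 4))

/-- The gem: the complement of `P_1 + P_4`. -/
def gem : SimpleGraph (Fin 5) := P1PlusP4ᶜ

/-- The graph `P_1 + 2P_2`. -/
def P1Plus2P2 : SimpleGraph (Fin 5) :=
  SimpleGraph.fromRel (fun a b => (a = 1 ∧ b = 2) ∨ (a = 3 ∧ b = 4))

/-- `G` is `H`-free: no induced subgraph of `G` is isomorphic to `H`; equivalently,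
there is no graph embedding (induced-subgraph embedding) of `H` into `G`. -/
def Free {W V : Type*} (H : SimpleGraph W) (G : SimpleGraph V) : Prop :=
  IsEmpty (H ↪g G)

/-- A graph is complete multipartite if its vertex set can be partitioned into
independent sets (the equivalence classes of some equivalence relation) such that
two vertices are adjacent if and only if they lie in different parts. -/
def IsCompleteMultipartite {V : Type*} (G : SimpleGraph V) : Prop :=
  ∃ s : Setoid V, ∀ v w : V, G.Adj v w ↔ ¬ s.r v w

section Aux
variable {V : Type*} {G : SimpleGraph V}

lemma paw_config (hpaw : _root_.Free paw G) {a b c d : V}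
    (hab : G.Adj a b) (hac : G.Adj a c) (hbc : G.Adj b c)
    (had : G.Adj a d) (hbd : ¬ G.Adj b d) (hcd : ¬ G.Adj c d) : False := by
  have hdb : d ≠ b := by rintro rfl; exact hcd hbc.symm
  have hdc : d ≠ c := by rintro rfl; exact hbd hbc
  have hinj : Function.Injective (![a, b, d, c] : Fin 4 → V) := by
    intro i j hij
    fin_cases i <;> fin_cases j <;>
      simp_all [hab.ne, hac.ne, hbc.ne, had.ne, hab.ne', hac.ne', hbc.ne', had.ne']
  have e : paw ↪g G := by
    refine ⟨⟨![a, b, d, c], hinj⟩, ?_⟩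
    intro i j
    have hba := hab.symm; have hca := hac.symm; have hcb := hbc.symm
    have hda := had.symm
    have hdb' : ¬ G.Adj d b := fun h => hbd h.symm
    have hdc' : ¬ G.Adj d c := fun h => hcd h.symm
    fin_cases i <;> fin_cases j <;> simp_all [paw, P1PlusP3, G.irrefl]
  exact hpaw.false e

/-- a vertex adjacent to one vertex of a triangle is adjacent to another one. -/
lemma adj_two (hpaw : _root_.Free paw G) {a b c v : V}
    (hab : G.Adj a b) (hac : G.Adj a c) (hbc : G.Adj b c)
    (hva : G.Adj v a) : G.Adj v b ∨ G.Adj v c := by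
  by_contra h
  push_neg at h
  exact paw_config hpaw hab hac hbc hva.symm
    (fun h' => h.1 h'.symm) (fun h' => h.2 h'.symm)

def InTri (G : SimpleGraph V) (u : V) : Prop :=
  ∃ a b, G.Adj u a ∧ G.Adj u b ∧ G.Adj a b

lemma inTri_of_adj (hpaw : _root_.Free paw G) {u v : V} (h : InTri G u)
    (huv : G.Adj u v) : InTri G v := by
  obtain ⟨a, b, hua, hub, hab⟩ := h
  rcases adj_two hpaw hua hub hab huv.symm with h' | h'
  · exact ⟨u, a, huv.symm, h', hua⟩
  · exact ⟨u, b, huv.symm, h', hub⟩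

lemma inTri_of_walk (hpaw : _root_.Free paw G) {u v : V} (w : G.Walk u v)
    (h : InTri G u) : InTri G v := by
  induction w with
  | nil => exact h
  | cons h' _ ih => exact ih (inTri_of_adj hpaw h h')

lemma edge_tri (hconn : G.Connected) (hpaw : _root_.Free paw G) (htri : ∃ u, InTri G u)
    {u v : V} (huv : G.Adj u v) : ∃ w, G.Adj u w ∧ G.Adj v w := by
  obtain ⟨u0, h0⟩ := htri
  obtain ⟨p⟩ := hconn.preconnected u0 u
  obtain ⟨a, b, hua, hub, hab⟩ := inTri_of_walk hpaw p h0
  rcases adj_two hpaw hua hub hab huv.symm with h' | h'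
  · exact ⟨a, hua, h'⟩
  · exact ⟨b, hub, h'⟩

lemma end1 (hpaw : _root_.Free paw G)
    (hedge : ∀ {u v : V}, G.Adj u v → ∃ w, G.Adj u w ∧ G.Adj v w)
    {x y z p : V} (hxz : G.Adj x z) (hyx : ¬ G.Adj y x) (hyz : ¬ G.Adj y z)
    (hyp : G.Adj y p) (hpx : G.Adj p x) : False := by
  by_cases hpz : G.Adj p z
  · exact paw_config hpaw hpx hpz hxz hyp.symm
      (fun h => hyx h.symm) (fun h => hyz h.symm)
  · obtain ⟨w, hxw, hzw⟩ := hedge hxz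
    have hpw : G.Adj p w := by
      rcases adj_two hpaw hxz hxw hzw hpx with h | h
      · exact absurd h hpz
      · exact h
    by_cases hyw : G.Adj y w
    · exact paw_config hpaw hxw.symm hzw.symm hxz hyw.symm
        (fun h => hyx h.symm) (fun h => hyz h.symm)
    · exact paw_config hpaw hpx hpw hxw hyp.symm
        (fun h => hyx h.symm) (fun h => hyw h.symm)

lemma main_ind (hconn : G.Connected) (hpaw : _root_.Free paw G) (htri : ∃ u, InTri G u) :
    ∀ n x y z, G.Adj x z → ¬ G.Adj y x → ¬ G.Adj y z → y ≠ x →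
      G.dist y x ≤ n → False := by
  have hedge : ∀ {u v : V}, G.Adj u v → ∃ w, G.Adj u w ∧ G.Adj v w :=
    fun h => edge_tri hconn hpaw htri h
  intro n
  induction n with
  | zero =>
    intro x y z hxz hyx hyz hne hdist
    exact hne ((hconn.preconnected y x).dist_eq_zero_iff.mp (Nat.le_zero.mp hdist))
  | succ n ih =>
    intro x y z hxz hyx hyz hne hdist
    obtain ⟨w, hw⟩ := (hconn.preconnected y x).exists_walk_length_eq_dist
    cases w with
    | nil => exact hne rfl
    | @cons _ p _ h q =>
      by_cases hpx : G.Adj p x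
      · exact end1 hpaw hedge hxz hyx hyz h hpx
      by_cases hpz : G.Adj p z
      · exact end1 hpaw hedge hxz.symm hyz hyx h hpz
      have hpxne : p ≠ x := by rintro rfl; exact hyx h
      refine ih x p z hxz hpx hpz hpxne ?_
      have hq : q.length ≤ n := by
        have := hw
        simp only [Walk.length_cons] at this
        omega
      exact le_trans (SimpleGraph.dist_le q) hq

end Aux

/-- Every connected paw-free graph is complete multipartite or `K_3`-free. -/
theorem statement0 {V : Type*} [Fintype V] (G : SimpleGraph V)
    (hconn : G.Connected) (hpaw : _root_.Free paw G) :
    _root_.IsCompleteMultipartite G ∨ _root_.Free (⊤ : SimpleGraph (Fin 3)) G := by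
  by_cases h3 : _root_.Free (⊤ : SimpleGraph (Fin 3)) G
  · exact Or.inr h3
  · left
    rw [_root_.Free, not_isEmpty_iff] at h3
    obtain ⟨e⟩ := h3
    have hadj : ∀ i j : Fin 3, i ≠ j → G.Adj (e i) (e j) := by
      intro i j hij
      exact e.map_adj_iff.mpr (by simpa using hij)
    have htri : ∃ u, InTri G u :=
      ⟨e 0, e 1, e 2, hadj 0 1 (by decide), hadj 0 2 (by decide), hadj 1 2 (by decide)⟩
    have htrans : ∀ {a b c : V}, ¬ G.Adj a b → ¬ G.Adj b c → ¬ G.Adj a c := by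
      intro a b c hab hbc hac
      have hba : b ≠ a := by rintro rfl; exact hbc hac
      exact main_ind hconn hpaw htri (G.dist b a) a b c hac
        (fun h => hab h.symm) hbc hba le_rfl
    refine ⟨⟨fun v w => ¬ G.Adj v w,
      ⟨fun v => G.irrefl, fun h h' => h h'.symm, fun h1 h2 => htrans h1 h2⟩⟩,
      fun v w => not_not.symm⟩
end

section
/- Let G be a $\overline{2P_1+P_3}$-free graph containing a set K of five pairwise adjacent vertices. Then there exist p ≥ 5 and a partition of V(G) into sets A_1,…,A_p, N_1,…,N_p, B such that: (i) K ⊆ A_1 ∪ … ∪ A_p; (ii) G[A_1 ∪ … ∪ A_p] is a complete multipartite graph with independent parts A_1,…,A_p; (iii) for every i ∈ {1,…,p}, every vertex of N_i has a neighbour in A_i and is anti-complete to A_j for every j ≠ i; and (iv) B is anti-complete to A_1 ∪ … ∪ A_p. Moreover, this partition is unique up to permuting the indices i on the pairs (A_i, N_i). -/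
open SimpleGraph

/-- A `K_5`-decomposition of `G` with respect to a set `K` of five pairwise adjacent
vertices: a partition of the vertex set into sets `A 1, …, A p, N 1, …, N p, B` with
`p ≥ 5` such that (i) `K ⊆ ⋃ A i`; (ii) the induced subgraph on `⋃ A i` is complete
multipartite with (nonempty) independent parts `A 1, …, A p`; (iii) every vertex of
`N i` has a neighbour in `A i` and is anti-complete to `A j` for all `j ≠ i`; and
(iv) `B` is anti-complete to `⋃ A i`. -/
def K5Decomp {V : Type*} (G : SimpleGraph V) (K : Set V) (p : ℕ)
    (A N : Fin p → Set V) (B : Set V) : Prop :=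
  5 ≤ p ∧
  ((⋃ i, A i) ∪ (⋃ i, N i) ∪ B = Set.univ) ∧
  (∀ i j, i ≠ j → Disjoint (A i) (A j)) ∧
  (∀ i j, i ≠ j → Disjoint (N i) (N j)) ∧
  (∀ i j, Disjoint (A i) (N j)) ∧
  (∀ i, Disjoint (A i) B) ∧
  (∀ i, Disjoint (N i) B) ∧
  (∀ i, (A i).Nonempty) ∧
  (K ⊆ ⋃ i, A i) ∧
  (∀ i j, ∀ u ∈ A i, ∀ v ∈ A j, (G.Adj u v ↔ i ≠ j)) ∧
  (∀ i, ∀ v ∈ N i, ∃ u ∈ A i, G.Adj v u) ∧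
  (∀ i j, i ≠ j → ∀ v ∈ N i, ∀ u ∈ A j, ¬ G.Adj v u) ∧
  (∀ v ∈ B, ∀ i, ∀ u ∈ A i, ¬ G.Adj v u)

lemma forb {V : Type*} (G : SimpleGraph V) (hfree : _root_.Free co2P1P3 G) {a b c d v : V}
    (hab : G.Adj a b) (hac : G.Adj a c) (had : G.Adj a d)
    (hbc : G.Adj b c) (hbd : G.Adj b d) (hcd : G.Adj c d)
    (hva : G.Adj v a) (hvb : G.Adj v b)
    (hvc : ¬ G.Adj v c) (hvd : ¬ G.Adj v d)
    (hvc' : v ≠ c) (hvd' : v ≠ d) : False := by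
  apply hfree.false
  have hab' := hab.ne; have hac' := hac.ne; have had' := had.ne
  have hbc' := hbc.ne; have hbd' := hbd.ne; have hcd' := hcd.ne
  have hva' := hva.ne; have hvb' := hvb.ne
  have hcv : ¬ G.Adj c v := fun h => hvc h.symm
  have hdv : ¬ G.Adj d v := fun h => hvd h.symm
  refine ⟨⟨![a, b, c, v, d], ?_⟩, ?_⟩
  · intro x y hxy
    fin_cases x <;> fin_cases y <;> simp_all
  · intro x y
    change G.Adj (![a, b, c, v, d] x) (![a, b, c, v, d] y) ↔ _
    fin_cases x <;> fin_cases y <;>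
      simp_all [co2P1P3, twoP1PlusP3, G.adj_comm, SimpleGraph.fromRel_adj, Function.Embedding.coeFn_mk]

theorem statement1 {V : Type*} [Fintype V] (G : SimpleGraph V)
    (hfree : _root_.Free co2P1P3 G) (K : Set V) (hK : K.ncard = 5)
    (hKadj : ∀ u ∈ K, ∀ v ∈ K, u ≠ v → G.Adj u v) :
    ∃ (p : ℕ) (A N : Fin p → Set V) (B : Set V),
      K5Decomp G K p A N B ∧
      ∀ (p' : ℕ) (A' N' : Fin p' → Set V) (B' : Set V),
        K5Decomp G K p' A' N' B' →
          B' = B ∧ ∃ e : Fin p' ≃ Fin p, ∀ i, A' i = A (e i) ∧ N' i = N (e i) := by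
  classical
  set S : V → Set V := fun v => {k | k ∈ K ∧ ¬ G.Adj v k} with hSdef
  have hSsub : ∀ v, S v ⊆ K := fun v k hk => hk.1
  have hSmem : ∀ v k, k ∈ K → k ∉ S v → G.Adj v k := by
    intro v k hk hns
    by_contra hadj
    exact hns ⟨hk, hadj⟩
  have hdich : ∀ v, v ∉ K → (S v).ncard ≤ 1 ∨ 4 ≤ (S v).ncard := by
    intro v hv
    by_contra hcon
    push_neg at hcon
    obtain ⟨h1, h4⟩ := hcon
    have hT : (K \ S v).ncard + (S v).ncard = K.ncard :=
      Set.ncard_diff_add_ncard_of_subset (hSsub v) (Set.toFinite K)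
    have hT2 : 1 < (K \ S v).ncard := by omega
    obtain ⟨t1, ht1, t2, ht2, ht12⟩ := (Set.one_lt_ncard (Set.toFinite _)).mp hT2
    obtain ⟨s1, hs1, s2, hs2, hs12⟩ := (Set.one_lt_ncard (Set.toFinite _)).mp h1
    have h1K := hs1.1; have h2K := hs2.1
    have hts : ∀ t ∈ K \ S v, ∀ s ∈ S v, t ≠ s := by
      rintro t ht s hs rfl; exact ht.2 hs
    exact forb G hfree (hKadj _ ht1.1 _ ht2.1 ht12)
      (hKadj _ ht1.1 _ h1K (hts _ ht1 _ hs1)) (hKadj _ ht1.1 _ h2K (hts _ ht1 _ hs2))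
      (hKadj _ ht2.1 _ h1K (hts _ ht2 _ hs1)) (hKadj _ ht2.1 _ h2K (hts _ ht2 _ hs2))
      (hKadj _ h1K _ h2K hs12)
      (hSmem v t1 ht1.1 ht1.2) (hSmem v t2 ht2.1 ht2.2) hs1.2 hs2.2
      (fun h => hv (h ▸ h1K)) (fun h => hv (h ▸ h2K))
  set Aset : Set V := {v | (S v).ncard ≤ 1} with hAdef
  have hKsub : K ⊆ Aset := by
    intro k hk
    have : S k ⊆ {k} := by
      intro k' hk'
      by_contra hne
      exact hk'.2 (hKadj _ hk _ hk'.1 (fun h => hne (h ▸ rfl)))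
    exact le_trans (Set.ncard_le_ncard this (Set.toFinite _)) (by simp)
  have hnotA : ∀ v, v ∉ Aset → v ∉ K ∧ 4 ≤ (S v).ncard := by
    intro v hv
    have hvK : v ∉ K := fun h => hv (hKsub h)
    rcases hdich v hvK with h | h
    · exact absurd h hv
    · exact ⟨hvK, h⟩
  have htrans : ∀ u v w, u ∈ Aset → v ∈ Aset → w ∈ Aset →
      ¬ G.Adj u v → ¬ G.Adj v w → G.Adj u w → False := by
    intro u v w hu hv hw huv hvw huw
    have hu' : (S u).ncard ≤ 1 := hu
    have hv' : (S v).ncard ≤ 1 := hv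
    have hw' : (S w).ncard ≤ 1 := hw
    have hBad : (S u ∪ S v ∪ S w).ncard ≤ 3 := by
      have := Set.ncard_union_le (S u ∪ S v) (S w)
      have := Set.ncard_union_le (S u) (S v)
      omega
    have hle : K.ncard ≤ (K \ (S u ∪ S v ∪ S w)).ncard + (S u ∪ S v ∪ S w).ncard :=
      Set.ncard_le_ncard_diff_add_ncard K _ (Set.toFinite _)
    have h2 : 1 < (K \ (S u ∪ S v ∪ S w)).ncard := by omega
    obtain ⟨k1, hk1, k2, hk2, hk12⟩ := (Set.one_lt_ncard (Set.toFinite _)).mp h2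
    have hg : ∀ k ∈ K \ (S u ∪ S v ∪ S w), G.Adj u k ∧ G.Adj v k ∧ G.Adj w k := by
      intro k hk
      refine ⟨hSmem u k hk.1 ?_, hSmem v k hk.1 ?_, hSmem w k hk.1 ?_⟩ <;>
        (intro h; exact hk.2 (by simp [h]))
    obtain ⟨h1u, h1v, h1w⟩ := hg _ hk1
    obtain ⟨h2u, h2v, h2w⟩ := hg _ hk2
    have hvu : v ≠ u := by rintro rfl; exact hvw huw
    have hvw' : v ≠ w := by rintro rfl; exact huv huw
    exact forb G hfree (hKadj _ hk1.1 _ hk2.1 hk12) h1u.symm h1w.symm h2u.symm h2w.symm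
      huw h1v h2v (fun h => huv h.symm) hvw hvu hvw'
  have hattach : ∀ v u w, v ∉ Aset → u ∈ Aset → w ∈ Aset →
      G.Adj v u → G.Adj v w → G.Adj u w → False := by
    intro v u w hv hu hw hvu hvw huw
    obtain ⟨hvK, h4⟩ := hnotA v hv
    have hu' : (S u).ncard ≤ 1 := hu
    have hw' : (S w).ncard ≤ 1 := hw
    have hBad : (S u ∪ S w).ncard ≤ 2 := by
      have := Set.ncard_union_le (S u) (S w)
      omega
    have hle : (S v).ncard ≤ ((S v) \ (S u ∪ S w)).ncard + (S u ∪ S w).ncard :=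
      Set.ncard_le_ncard_diff_add_ncard _ _ (Set.toFinite _)
    have h2 : 1 < ((S v) \ (S u ∪ S w)).ncard := by omega
    obtain ⟨k1, hk1, k2, hk2, hk12⟩ := (Set.one_lt_ncard (Set.toFinite _)).mp h2
    have hg : ∀ k ∈ (S v) \ (S u ∪ S w), G.Adj u k ∧ G.Adj w k ∧ ¬ G.Adj v k ∧ k ∈ K := by
      intro k hk
      exact ⟨hSmem u k hk.1.1 (fun h => hk.2 (by simp [h])),
        hSmem w k hk.1.1 (fun h => hk.2 (by simp [h])), hk.1.2, hk.1.1⟩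
    obtain ⟨h1u, h1w, h1v, h1K⟩ := hg _ hk1
    obtain ⟨h2u, h2w, h2v, h2K⟩ := hg _ hk2
    exact forb G hfree huw h1u h2u h1w h2w
      (hKadj _ h1K _ h2K hk12) hvu hvw h1v h2v
      (fun h => hvK (h ▸ h1K)) (fun h => hvK (h ▸ h2K))
  -- the setoid of non-adjacency on Aset
  set s : Setoid ↥Aset :=
    ⟨fun x y => ¬ G.Adj x.1 y.1,
      ⟨fun x => G.irrefl, fun {x y} h ha => h ha.symm,
        fun {x y z} hxy hyz hxz => htrans x.1 y.1 z.1 x.2 y.2 z.2 hxy hyz hxz⟩⟩ with hsdef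
  haveI : Finite (Quotient s) := Quotient.finite s
  haveI : Fintype (Quotient s) := Fintype.ofFinite _
  set p := Fintype.card (Quotient s) with hp
  set e : Quotient s ≃ Fin p := Fintype.equivFin _ with hedef
  set A : Fin p → Set V :=
    fun i => {v | ∃ h : v ∈ Aset, e (Quotient.mk s ⟨v, h⟩) = i} with hAdef2
  set N : Fin p → Set V := fun i => {v | v ∉ Aset ∧ ∃ u ∈ A i, G.Adj v u} with hNdef
  set B : Set V := {v | v ∉ Aset ∧ ∀ u ∈ Aset, ¬ G.Adj v u} with hBdef
  have hAsub : ∀ i, A i ⊆ Aset := fun i v hv => hv.choose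
  have hAunion : (⋃ i, A i) = Aset :=
    subset_antisymm (Set.iUnion_subset hAsub)
      (fun v hv => Set.mem_iUnion.mpr ⟨e (Quotient.mk s ⟨v, hv⟩), hv, rfl⟩)
  have hadjA : ∀ u v (hu : u ∈ Aset) (hv : v ∈ Aset),
      G.Adj u v ↔ e (Quotient.mk s ⟨u, hu⟩) ≠ e (Quotient.mk s ⟨v, hv⟩) := by
    intro u v hu hv
    constructor
    · intro hadj heq
      exact Quotient.exact (e.injective heq) hadj
    · intro hne
      by_contra hadj
      exact hne (congrArg e (Quotient.sound hadj))
  have hcard5 : 5 ≤ p := by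
    have hinj : Function.Injective
        (fun k : ↥K => (Quotient.mk s ⟨k.1, hKsub k.2⟩ : Quotient s)) := by
      intro k k' h
      have h2 := Quotient.exact h
      by_contra hne
      have hne' : k.1 ≠ k'.1 := fun hh => hne (Subtype.ext hh)
      exact h2 (hKadj _ k.2 _ k'.2 hne')
    have := Nat.card_le_card_of_injective _ hinj
    rwa [Nat.card_coe_set_eq, hK, Nat.card_eq_fintype_card] at this
  have hAne : ∀ i, (A i).Nonempty := by
    intro i
    refine ⟨((e.symm i).out : ↥Aset).1, ((e.symm i).out).2, ?_⟩
    show e (Quotient.mk s (e.symm i).out) = i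
    rw [Quotient.out_eq, Equiv.apply_symm_apply]
  have hdisjA : ∀ i j, i ≠ j → Disjoint (A i) (A j) := by
    intro i j hij
    rw [Set.disjoint_left]
    rintro v ⟨h, he⟩ ⟨h', he'⟩
    exact hij (he.symm.trans he')
  have hdecomp : K5Decomp G K p A N B := by
    refine ⟨hcard5, ?_, hdisjA, ?_, ?_, ?_, ?_, hAne, ?_, ?_, ?_, ?_, ?_⟩
    · -- union is univ
      apply Set.eq_univ_of_forall
      intro v
      by_cases hv : v ∈ Aset
      · exact Or.inl (Or.inl (by rw [hAunion]; exact hv))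
      · by_cases hn : ∃ u ∈ Aset, G.Adj v u
        · obtain ⟨u, hu, hadj⟩ := hn
          exact Or.inl (Or.inr (Set.mem_iUnion.mpr
            ⟨e (Quotient.mk s ⟨u, hu⟩), hv, u, ⟨hu, rfl⟩, hadj⟩))
        · push_neg at hn
          exact Or.inr ⟨hv, hn⟩
    · -- disjoint N
      intro i j hij
      rw [Set.disjoint_left]
      rintro v ⟨hv, u, ⟨hu, heu⟩, hadju⟩ ⟨_, w, ⟨hw, hew⟩, hadjw⟩
      have huw : G.Adj u w := by
        rw [hadjA u w hu hw, heu, hew]; exact hij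
      exact hattach v u w hv hu hw hadju hadjw huw
    · exact fun i j => Set.disjoint_left.mpr (fun v hv hv' => hv'.1 (hAsub i hv))
    · exact fun i => Set.disjoint_left.mpr (fun v hv hv' => hv'.1 (hAsub i hv))
    · -- disjoint N B
      intro i
      rw [Set.disjoint_left]
      rintro v ⟨hv, u, hu, hadj⟩ ⟨_, hall⟩
      exact hall u (hAsub i hu) hadj
    · rw [hAunion]; exact hKsub
    · -- complete multipartite
      rintro i j u ⟨hu, heu⟩ v ⟨hv, hev⟩
      rw [hadjA u v hu hv, heu, hev]
    · exact fun i v hv => hv.2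
    · -- N anticomplete to other parts
      rintro i j hij v ⟨hv, u', hu', hadj'⟩ u hu hadj
      have huu' : G.Adj u u' := by
        rw [hadjA u u' (hAsub j hu) (hAsub i hu'), hu.choose_spec, hu'.choose_spec]
        exact hij.symm
      exact hattach v u u' hv (hAsub j hu) (hAsub i hu') hadj hadj' huu'
    · rintro v ⟨hv, hall⟩ i u hu hadj
      exact hall u (hAsub i hu) hadj
  refine ⟨p, A, N, B, hdecomp, ?_⟩
  rintro p' A' N' B' ⟨hp5', hU', hdA', hdN', hdAN', hdAB', hdNB', hne', hKsub',
    hadj', hNex', hNanti', hB'⟩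
  have hKone : ∀ (i : Fin p') (k k' : V), k ∈ K → k ∈ A' i → k' ∈ K → k' ∈ A' i →
      k = k' := by
    intro i k k' hk hki hk' hki'
    by_contra hne
    exact absurd ((hadj' i i k hki k' hki').mp (hKadj _ hk _ hk' hne)) (by simp)
  have hAeq : (⋃ i, A' i) = Aset := by
    apply subset_antisymm
    · intro u hu
      rw [Set.mem_iUnion] at hu
      obtain ⟨j, hj⟩ := hu
      have hsub : S u ⊆ K ∩ A' j := by
        intro k hk
        obtain ⟨j', hj'⟩ := Set.mem_iUnion.mp (hKsub' hk.1)
        refine ⟨hk.1, ?_⟩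
        by_cases hjj : j' = j
        · exact hjj ▸ hj'
        · exact absurd ((hadj' j j' u hj k hj').mpr (Ne.symm hjj)) hk.2
      show (S u).ncard ≤ 1
      apply le_trans (Set.ncard_le_ncard hsub (Set.toFinite _))
      rw [Set.ncard_le_one (Set.toFinite _)]
      intro a ha b hb
      exact hKone j a b ha.1 ha.2 hb.1 hb.2
    · intro v hv
      have hvuniv : v ∈ Set.univ := Set.mem_univ v
      rw [← hU'] at hvuniv
      rcases hvuniv with (h | h) | h
      · exact h
      · exfalso
        rw [Set.mem_iUnion] at h
        obtain ⟨i, hi⟩ := h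
        have h1 : (K ∩ A' i).ncard ≤ 1 := by
          rw [Set.ncard_le_one (Set.toFinite _)]
          intro a ha b hb
          exact hKone i a b ha.1 ha.2 hb.1 hb.2
        have hdd : (K \ (K ∩ A' i)).ncard + (K ∩ A' i).ncard = K.ncard :=
          Set.ncard_diff_add_ncard_of_subset Set.inter_subset_left (Set.toFinite _)
        have h2 : 1 < (K \ (K ∩ A' i)).ncard := by omega
        obtain ⟨k1, hk1, k2, hk2, hk12⟩ := (Set.one_lt_ncard (Set.toFinite _)).mp h2
        have hSm : ∀ k ∈ K \ (K ∩ A' i), k ∈ S v := by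
          intro k hk
          obtain ⟨j, hj⟩ := Set.mem_iUnion.mp (hKsub' hk.1)
          have hji : j ≠ i := by rintro rfl; exact hk.2 ⟨hk.1, hj⟩
          exact ⟨hk.1, hNanti' i j (Ne.symm hji) v hi k hj⟩
        have hpair : ({k1, k2} : Set V) ⊆ S v := by
          rintro x (rfl | rfl)
          exacts [hSm _ hk1, hSm _ hk2]
        have h2' := Set.ncard_le_ncard hpair (Set.toFinite _)
        rw [Set.ncard_pair hk12] at h2'
        have hle1 : (S v).ncard ≤ 1 := hv
        omega
      · exfalso
        have hKS : K ⊆ S v := by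
          intro k hk
          obtain ⟨j, hj⟩ := Set.mem_iUnion.mp (hKsub' hk)
          exact ⟨hk, hB' v h j k hj⟩
        have h5 := Set.ncard_le_ncard hKS (Set.toFinite _)
        have hle1 : (S v).ncard ≤ 1 := hv
        omega
  have toU : ∀ {w : V}, w ∈ Aset → ∃ i, w ∈ A' i :=
    fun {w} h => Set.mem_iUnion.mp (by rw [hAeq]; exact h)
  have frU : ∀ {w : V} {i : Fin p'}, w ∈ A' i → w ∈ Aset :=
    fun {w i} h => by rw [← hAeq]; exact Set.mem_iUnion.mpr ⟨i, h⟩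
  choose vv hvv using hne'
  have hvvA : ∀ i, vv i ∈ Aset := fun i => frU (hvv i)
  set f : Fin p' → Fin p := fun i => e (Quotient.mk s ⟨vv i, hvvA i⟩) with hfdef
  have hC1 : ∀ i, A' i = A (f i) := by
    intro i
    apply subset_antisymm
    · intro u hu
      have huA : u ∈ Aset := frU hu
      refine ⟨huA, ?_⟩
      have hnadj : ¬ G.Adj u (vv i) := by
        intro h
        exact absurd ((hadj' i i u hu (vv i) (hvv i)).mp h) (by simp)
      by_contra hne2
      exact hnadj ((hadjA u (vv i) huA (hvvA i)).mpr hne2)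
    · rintro w ⟨hwA, hew⟩
      have hnadj : ¬ G.Adj w (vv i) := by
        rw [hadjA w (vv i) hwA (hvvA i), hew]
        simp [hfdef]
      obtain ⟨j, hj⟩ := toU hwA
      by_cases hji : j = i
      · exact hji ▸ hj
      · exact absurd ((hadj' j i w hj (vv i) (hvv i)).mpr hji) hnadj
  have hfinj : Function.Injective f := by
    intro i j hij
    have hmem : vv i ∈ A' j := by rw [hC1 j, ← hij, ← hC1 i]; exact hvv i
    by_contra hne2
    exact Set.disjoint_left.mp (hdA' i j hne2) (hvv i) hmem
  have hfsurj : Function.Surjective f := by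
    intro l
    obtain ⟨w, hw⟩ := hAne l
    have hwA : w ∈ Aset := hAsub l hw
    obtain ⟨i, hi⟩ := toU hwA
    refine ⟨i, ?_⟩
    have hmem : w ∈ A (f i) := by rw [← hC1 i]; exact hi
    by_contra hne2
    exact Set.disjoint_left.mp (hdisjA (f i) l hne2) hmem hw
  have hC2 : ∀ i, N' i = N (f i) := by
    intro i
    apply subset_antisymm
    · intro v hv
      have hvA : v ∉ Aset := by
        intro hmem
        obtain ⟨j, hj⟩ := toU hmem
        exact Set.disjoint_left.mp (hdAN' j i) hj hv
      obtain ⟨u, hu, hadj⟩ := hNex' i v hv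
      exact ⟨hvA, u, by rw [← hC1 i]; exact hu, hadj⟩
    · rintro v ⟨hvA, u, hu, hadj⟩
      have hu' : u ∈ A' i := by rw [hC1 i]; exact hu
      have hvuniv : v ∈ Set.univ := Set.mem_univ v
      rw [← hU'] at hvuniv
      rcases hvuniv with (h | h) | h
      · exact absurd (by rw [← hAeq]; exact h) hvA
      · obtain ⟨j, hj⟩ := Set.mem_iUnion.mp h
        by_cases hji : j = i
        · exact hji ▸ hj
        · exact absurd hadj (hNanti' j i hji v hj u hu')
      · exact absurd hadj (hB' v h i u hu')
  have hC3 : B' = B := by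
    apply subset_antisymm
    · intro v hv
      refine ⟨?_, ?_⟩
      · intro hmem
        obtain ⟨j, hj⟩ := toU hmem
        exact Set.disjoint_left.mp (hdAB' j) hj hv
      · intro u hu hadj
        obtain ⟨j, hj⟩ := toU hu
        exact hB' v hv j u hj hadj
    · intro v hv
      have hvuniv : v ∈ Set.univ := Set.mem_univ v
      rw [← hU'] at hvuniv
      rcases hvuniv with (h | h) | h
      · exact absurd (by rw [← hAeq]; exact h) hv.1
      · exfalso
        obtain ⟨j, hj⟩ := Set.mem_iUnion.mp h
        obtain ⟨u, hu, hadj⟩ := hNex' j v hj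
        exact hv.2 u (frU hu) hadj
      · exact h
  exact ⟨hC3, Equiv.ofBijective f ⟨hfinj, hfsurj⟩, fun i => ⟨hC1 i, hC2 i⟩⟩
end

section
/- Let G be a $\overline{2P_1+P_3}$-free graph and let K be a set of five pairwise adjacent vertices of G. Then every vertex v ∈ V(G) \ K has either at most one non-neighbour in K or at most one neighbour in K. -/
open SimpleGraph

theorem statement2 {V : Type*} [Fintype V] (G : SimpleGraph V)
    (hfree : _root_.Free co2P1P3 G) (K : Set V) (hK : K.ncard = 5)
    (hKadj : ∀ u ∈ K, ∀ v ∈ K, u ≠ v → G.Adj u v)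
    (v : V) (hv : v ∉ K) :
    {u ∈ K | ¬ G.Adj v u}.ncard ≤ 1 ∨ {u ∈ K | G.Adj v u}.ncard ≤ 1 := by
  by_contra hcon
  push_neg at hcon
  obtain ⟨h1, h2⟩ := hcon
  rw [Set.one_lt_ncard_iff] at h1 h2
  obtain ⟨c, d, ⟨hcK, hvc⟩, ⟨hdK, hvd⟩, hcd⟩ := h1
  obtain ⟨a, b, ⟨haK, hva⟩, ⟨hbK, hvb⟩, hab⟩ := h2
  -- distinctness
  have hac : a ≠ c := fun h => hvc (h ▸ hva)
  have had : a ≠ d := fun h => hvd (h ▸ hva)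
  have hbc : b ≠ c := fun h => hvc (h ▸ hvb)
  have hbd : b ≠ d := fun h => hvd (h ▸ hvb)
  have hva' : v ≠ a := fun h => hv (h ▸ haK)
  have hvb' : v ≠ b := fun h => hv (h ▸ hbK)
  have hvc' : v ≠ c := fun h => hv (h ▸ hcK)
  have hvd' : v ≠ d := fun h => hv (h ▸ hdK)
  -- adjacencies
  have Aab : G.Adj a b := hKadj a haK b hbK hab
  have Aac : G.Adj a c := hKadj a haK c hcK hac
  have Aad : G.Adj a d := hKadj a haK d hdK had
  have Abc : G.Adj b c := hKadj b hbK c hcK hbc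
  have Abd : G.Adj b d := hKadj b hbK d hdK hbd
  have Acd : G.Adj c d := hKadj c hcK d hdK hcd
  have f : Fin 5 → V := ![a, b, c, v, d]
  have hinj : Function.Injective ![a, b, c, v, d] := by
    intro i j
    fin_cases i <;> fin_cases j <;>
      simp_all [Matrix.cons_val_zero, Matrix.cons_val_one, eq_comm] <;>
      first
        | rfl
        | (intro h; exact absurd h (by tauto))
  refine hfree.false ⟨⟨![a, b, c, v, d], hinj⟩, @fun i j => ?_⟩
  have hvcs : ¬ G.Adj c v := fun h => hvc h.symm
  have hvds : ¬ G.Adj d v := fun h => hvd h.symm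
  fin_cases i <;> fin_cases j <;>
    simp [co2P1P3, twoP1PlusP3, Aab, Aac, Aad, Abc, Abd, Acd, Aab.symm, Aac.symm,
      Aad.symm, Abc.symm, Abd.symm, Acd.symm, hva, hvb, hva.symm, hvb.symm,
      hvc, hvd, hvcs, hvds, G.irrefl]
end

section
/- Let G be a $\overline{2P_1+P_3}$-free graph, let K be a set of five pairwise adjacent vertices of G, and let L be the set consisting of the vertices of K together with all vertices of V(G) \ K that have at most one non-neighbour in K. Then G[L] is a complete multipartite graph. -/
open SimpleGraph

private lemma aux_inj {V : Type*} (a b x y z : V)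
    (hab : a ≠ b) (hax : a ≠ x) (hay : a ≠ y) (haz : a ≠ z)
    (hbx : b ≠ x) (hby : b ≠ y) (hbz : b ≠ z)
    (hxy : x ≠ y) (hxz : x ≠ z) (hyz : y ≠ z) :
    Function.Injective (![a, b, x, y, z] : Fin 5 → V) := by
  intro i j h
  fin_cases i <;> fin_cases j <;>
    simp_all [hab.symm, hax.symm, hay.symm, haz.symm, hbx.symm, hby.symm, hbz.symm,
      hxy.symm, hxz.symm, hyz.symm]

private lemma aux_rel {V : Type*} (G : SimpleGraph V) (a b x y z : V)
    (hgab : G.Adj a b) (hax : G.Adj a x) (hay : G.Adj a y) (haz : G.Adj a z)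
    (hbx : G.Adj b x) (hby : G.Adj b y) (hbz : G.Adj b z)
    (hxz : G.Adj x z) (hxy : ¬ G.Adj x y) (hyz : ¬ G.Adj y z) :
    ∀ i j : Fin 5, G.Adj (![a, b, x, y, z] i) (![a, b, x, y, z] j) ↔ co2P1P3.Adj i j := by
  have hco : ∀ i j : Fin 5, co2P1P3.Adj i j ↔
      (i ≠ j ∧ ¬(((i = 2 ∧ j = 3) ∨ (i = 3 ∧ j = 4)) ∨ ((j = 2 ∧ i = 3) ∨ (j = 3 ∧ i = 4)))) := by
    intro i j
    simp only [co2P1P3, twoP1PlusP3, compl_adj, fromRel_adj, ne_eq, not_and, not_or]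
    tauto
  intro i j
  have hyx : ¬ G.Adj y x := fun h => hxy h.symm
  have hzy : ¬ G.Adj z y := fun h => hyz h.symm
  fin_cases i <;> fin_cases j <;>
    simp_all [hco, hgab.symm, hax.symm, hay.symm, haz.symm, hbx.symm, hby.symm, hbz.symm,
      hxz.symm]

theorem statement3 {V : Type*} [Fintype V] (G : SimpleGraph V)
    (hfree : _root_.Free co2P1P3 G) (K : Set V) (hK : K.ncard = 5)
    (hKadj : ∀ u ∈ K, ∀ v ∈ K, u ≠ v → G.Adj u v)
    (L : Set V)
    (hL : L = K ∪ {v | v ∉ K ∧ {u ∈ K | ¬ G.Adj v u}.ncard ≤ 1}) :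
    _root_.IsCompleteMultipartite (G.induce L) := by

  classical
  -- For every `v ∈ L`, the set of "bad" vertices of `K` for `v` has at most one element.
  have hBcard : ∀ v ∈ L, ({u ∈ K | u = v ∨ ¬ G.Adj v u}).ncard ≤ 1 := by
    intro v hv
    rw [hL] at hv
    rcases hv with hv | ⟨hvK, hv1⟩
    · have hsub : {u ∈ K | u = v ∨ ¬ G.Adj v u} ⊆ {v} := by
        rintro u ⟨huK, h⟩
        rcases h with h | h
        · exact h
        · by_contra hne
          exact h ((hKadj v hv u huK (fun e => hne e.symm)))
      calc ({u ∈ K | u = v ∨ ¬ G.Adj v u}).ncard ≤ ({v} : Set V).ncard :=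
            Set.ncard_le_ncard hsub (Set.finite_singleton v)
        _ = 1 := Set.ncard_singleton v
    · have hsub : {u ∈ K | u = v ∨ ¬ G.Adj v u} ⊆ {u ∈ K | ¬ G.Adj v u} := by
        rintro u ⟨huK, h⟩
        rcases h with h | h
        · exact absurd (h ▸ huK) hvK
        · exact ⟨huK, h⟩
      exact le_trans (Set.ncard_le_ncard hsub (Set.toFinite _)) hv1
  -- key transitivity of non-adjacency on L
  have key : ∀ x ∈ L, ∀ y ∈ L, ∀ z ∈ L, ¬ G.Adj x y → ¬ G.Adj y z → ¬ G.Adj x z := by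
    intro x hx y hy z hz hxy hyz hxz
    have h1 := hBcard x hx
    have h2 := hBcard y hy
    have h3 := hBcard z hz
    have hBsub : {u ∈ K | u = x ∨ ¬ G.Adj x u} ∪ {u ∈ K | u = y ∨ ¬ G.Adj y u}
        ∪ {u ∈ K | u = z ∨ ¬ G.Adj z u} ⊆ K := by
      rintro u ((⟨h, _⟩ | ⟨h, _⟩) | ⟨h, _⟩) <;> exact h
    have hBle : ({u ∈ K | u = x ∨ ¬ G.Adj x u} ∪ {u ∈ K | u = y ∨ ¬ G.Adj y u}
        ∪ {u ∈ K | u = z ∨ ¬ G.Adj z u}).ncard ≤ 3 := by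
      have hu1 := Set.ncard_union_le ({u ∈ K | u = x ∨ ¬ G.Adj x u} ∪ {u ∈ K | u = y ∨ ¬ G.Adj y u})
        {u ∈ K | u = z ∨ ¬ G.Adj z u}
      have hu2 := Set.ncard_union_le {u ∈ K | u = x ∨ ¬ G.Adj x u} {u ∈ K | u = y ∨ ¬ G.Adj y u}
      omega
    have hdiff : 1 < (K \ ({u ∈ K | u = x ∨ ¬ G.Adj x u} ∪ {u ∈ K | u = y ∨ ¬ G.Adj y u}
        ∪ {u ∈ K | u = z ∨ ¬ G.Adj z u})).ncard := by
      have := Set.ncard_diff hBsub (Set.toFinite _)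
      omega
    rw [Set.one_lt_ncard_iff (Set.toFinite _)] at hdiff
    obtain ⟨a, b, ha, hb, hab⟩ := hdiff
    have hmem : ∀ w c, c ∈ K → c ∉ {u ∈ K | u = w ∨ ¬ G.Adj w u} → c ≠ w ∧ G.Adj w c := by
      intro w c hcK hnc
      constructor
      · rintro rfl; exact hnc ⟨hcK, Or.inl rfl⟩
      · by_contra hadj; exact hnc ⟨hcK, Or.inr hadj⟩
    have haK : a ∈ K := ha.1
    have hbK : b ∈ K := hb.1
    have hax := hmem x a haK (fun h => ha.2 (Or.inl (Or.inl h)))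
    have hay := hmem y a haK (fun h => ha.2 (Or.inl (Or.inr h)))
    have haz := hmem z a haK (fun h => ha.2 (Or.inr h))
    have hbx := hmem x b hbK (fun h => hb.2 (Or.inl (Or.inl h)))
    have hby := hmem y b hbK (fun h => hb.2 (Or.inl (Or.inr h)))
    have hbz := hmem z b hbK (fun h => hb.2 (Or.inr h))
    have hgab : G.Adj a b := hKadj a haK b hbK hab
    have hnxy : x ≠ y := by rintro rfl; exact hyz hxz
    have hnyz : y ≠ z := by rintro rfl; exact hxy hxz
    have hnxz : x ≠ z := hxz.ne
    have hinj := aux_inj a b x y z hab hax.1 hay.1 haz.1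
      hbx.1 hby.1 hbz.1 hnxy hnxz hnyz
    have hrel := aux_rel G a b x y z hgab hax.2.symm hay.2.symm haz.2.symm
      hbx.2.symm hby.2.symm hbz.2.symm hxz hxy hyz
    exact hfree.false ⟨⟨![a, b, x, y, z], hinj⟩, fun {i j} => hrel i j⟩
  -- assemble the setoid: two vertices of L are related iff they are non-adjacent in G
  refine ⟨⟨fun v w => ¬ G.Adj (v : V) (w : V), ?_, ?_, ?_⟩, ?_⟩
  · intro v; exact G.irrefl
  · intro v w h ha; exact h ha.symm
  · intro v w u h1 h2; exact key v v.2 w w.2 u u.2 h1 h2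
  · intro v w
    simp [SimpleGraph.comap_adj]
end

section
/- Let G be a $\overline{2P_1+P_3}$-free graph, let K be a set of five pairwise adjacent vertices of G, let L be the set consisting of the vertices of K together with all vertices of V(G) \ K that have at most one non-neighbour in K, and suppose G[L] is complete multipartite with independent parts A_1,…,A_p. Then every vertex of V(G) \ L has neighbours in at most one of the parts A_1,…,A_p; that is, if v ∉ L has a neighbour in A_i and a neighbour in A_j, then i = j. -/
open SimpleGraph

lemma forbidden {V : Type*} (G : SimpleGraph V)
    (hfree : _root_.Free co2P1P3 G)
    (c q r x y : V)
    (hcq : G.Adj c q) (hcr : G.Adj c r) (hcx : ¬ G.Adj c x) (hcy : ¬ G.Adj c y)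
    (hqr : G.Adj q r) (hqx : G.Adj q x) (hqy : G.Adj q y)
    (hrx : G.Adj r x) (hry : G.Adj r y) (hxy : G.Adj x y) : False := by
  have n1 : c ≠ x := by rintro rfl; exact hcy hxy
  have n2 : c ≠ y := by rintro rfl; exact hcx hxy.symm
  have n3 : c ≠ q := hcq.ne
  have n4 : c ≠ r := hcr.ne
  have n5 : q ≠ r := hqr.ne
  have n6 : q ≠ x := hqx.ne
  have n7 : q ≠ y := hqy.ne
  have n8 : r ≠ x := hrx.ne
  have n9 : r ≠ y := hry.ne
  have n10 : x ≠ y := hxy.ne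
  have s1 := hcq.symm; have s2 := hcr.symm; have s3 := hqr.symm
  have s4 := hqx.symm; have s5 := hqy.symm; have s6 := hrx.symm
  have s7 := hry.symm; have s8 := hxy.symm
  have hcx' : ¬ G.Adj x c := fun h => hcx h.symm
  have hcy' : ¬ G.Adj y c := fun h => hcy h.symm
  have hinj : Function.Injective ![q, r, x, c, y] := by
    intro u w h
    fin_cases u <;> fin_cases w <;> simp_all
  have hrel : ∀ {u w : Fin 5}, G.Adj (![q, r, x, c, y] u) (![q, r, x, c, y] w) ↔ co2P1P3.Adj u w := by
    intro u w
    fin_cases u <;> fin_cases w <;>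
      simp_all [co2P1P3, twoP1PlusP3, SimpleGraph.fromRel_adj, SimpleGraph.compl_adj, Fin.ext_iff] <;> decide
  exact hfree.elim ⟨⟨![q, r, x, c, y], hinj⟩, hrel⟩

lemma sided {V : Type*} [Fintype V] (G : SimpleGraph V)
    (hfree : _root_.Free co2P1P3 G) (K : Set V)
    (hKadj : ∀ u ∈ K, ∀ w ∈ K, u ≠ w → G.Adj u w)
    (hK5 : 5 ≤ K.ncard)
    {p : ℕ} (A : Fin p → Set V)
    (hKA : ∀ u ∈ K, ∃ k, u ∈ A k)
    (hadj : ∀ i j, ∀ u ∈ A i, ∀ w ∈ A j, (G.Adj u w ↔ i ≠ j))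
    (v : V) (hvK : v ∉ K)
    (i j : Fin p) (hij : i ≠ j)
    (a : V) (hai : a ∈ A i) (hva : G.Adj v a)
    (b : V) (hbj : b ∈ A j) (hvb : G.Adj v b)
    (s : V) (hsK : s ∈ K) (hvs : ¬ G.Adj v s) (hsAi : s ∈ A i)
    (hM : {u | u ∈ K ∧ ¬ G.Adj v u ∧ u ∉ A i ∧ u ∉ A j}.Subsingleton) : False := by
  -- two vertices of K in the same part are equal
  have hKpart : ∀ (k : Fin p), ∀ u ∈ K, ∀ w ∈ K, u ∈ A k → w ∈ A k → u = w := by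
    intro k u hu w hw huk hwk
    by_contra hne
    exact ((hadj k k u huk w hwk).1 (hKadj u hu w hw hne)) rfl
  have subcard : ∀ (S : Set V), S.Subsingleton → S.ncard ≤ 1 :=
    fun S hS => (Set.ncard_le_one_iff (Set.toFinite _)).2 fun ha hb => hS ha hb
  have hKi : ({u | u ∈ K ∧ u ∈ A i} : Set V).Subsingleton :=
    fun u hu w hw => hKpart i u hu.1 w hw.1 hu.2 hw.2
  have hKj : ({u | u ∈ K ∧ u ∈ A j} : Set V).Subsingleton :=
    fun u hu w hw => hKpart j u hu.1 w hw.1 hu.2 hw.2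
  -- the set of non-neighbours of v in K has at most 3 elements
  have hN3 : ({u | u ∈ K ∧ ¬ G.Adj v u} : Set V).ncard ≤ 3 := by
    have hsub : ({u | u ∈ K ∧ ¬ G.Adj v u} : Set V) ⊆
        ({u | u ∈ K ∧ u ∈ A i} ∪ ({u | u ∈ K ∧ u ∈ A j} ∪
          {u | u ∈ K ∧ ¬ G.Adj v u ∧ u ∉ A i ∧ u ∉ A j})) := by
      rintro u ⟨huK, huv⟩
      by_cases h1 : u ∈ A i
      · exact Or.inl ⟨huK, h1⟩
      by_cases h2 : u ∈ A j
      · exact Or.inr (Or.inl ⟨huK, h2⟩)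
      · exact Or.inr (Or.inr ⟨huK, huv, h1, h2⟩)
    calc ({u | u ∈ K ∧ ¬ G.Adj v u} : Set V).ncard
        ≤ _ := Set.ncard_le_ncard hsub (Set.toFinite _)
      _ ≤ _ + _ := Set.ncard_union_le _ _
      _ ≤ 1 + (1 + 1) := by
          gcongr
          · exact subcard _ hKi
          · calc _ ≤ _ + _ := Set.ncard_union_le _ _
              _ ≤ 1 + 1 := by gcongr; exacts [subcard _ hKj, subcard _ hM]
      _ ≤ 3 := by norm_num
  -- find a neighbour w of v in K outside A i and A j
  obtain ⟨w, hwK, hvw, hwj⟩ : ∃ w ∈ K, G.Adj v w ∧ w ∉ A j := by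
    by_contra h
    push_neg at h
    have hsub : K ⊆ ({u | u ∈ K ∧ ¬ G.Adj v u} ∪ {u | u ∈ K ∧ u ∈ A j}) := by
      intro u huK
      by_cases h1 : G.Adj v u
      · exact Or.inr ⟨huK, h u huK h1⟩
      · exact Or.inl ⟨huK, h1⟩
    have : (5 : ℕ) ≤ 3 + 1 := by
      calc (5:ℕ) ≤ K.ncard := hK5
        _ ≤ _ := Set.ncard_le_ncard hsub (Set.toFinite _)
        _ ≤ _ + _ := Set.ncard_union_le _ _
        _ ≤ 3 + 1 := by gcongr; exact subcard _ hKj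
    omega
  have hws : w ≠ s := fun h => hvs (h ▸ hvw)
  have hwi : w ∉ A i := fun h => hws (hKpart i w hwK s hsK h hsAi)
  obtain ⟨kw, hwkw⟩ := hKA w hwK
  have hkwj : kw ≠ j := fun h => hwj (h ▸ hwkw)
  have hkwi : kw ≠ i := fun h => hwi (h ▸ hwkw)
  by_cases hx : ∃ x, x ∈ K ∧ ¬ G.Adj v x ∧ x ∉ A i ∧ x ∉ A j
  · -- case B
    obtain ⟨x, hxK, hvx, hxi, hxj⟩ := hx
    obtain ⟨kx, hxkx⟩ := hKA x hxK
    have hkxj : kx ≠ j := fun h => hxj (h ▸ hxkx)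
    have hwx : w ≠ x := fun h => hvx (h ▸ hvw)
    have hsx : s ≠ x := fun h => hxi (h ▸ hsAi)
    exact forbidden G hfree v b w s x hvb hvw hvs hvx
      ((hadj j kw b hbj w hwkw).2 (Ne.symm hkwj))
      ((hadj j i b hbj s hsAi).2 (Ne.symm hij))
      ((hadj j kx b hbj x hxkx).2 (Ne.symm hkxj))
      (hKadj w hwK s hsK hws)
      (hKadj w hwK x hxK hwx)
      (hKadj s hsK x hxK hsx)
  · -- case C
    push_neg at hx
    have hN2 : ({u | u ∈ K ∧ ¬ G.Adj v u} : Set V).ncard ≤ 2 := by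
      have hsub : ({u | u ∈ K ∧ ¬ G.Adj v u} : Set V) ⊆
          ({u | u ∈ K ∧ u ∈ A i} ∪ {u | u ∈ K ∧ u ∈ A j}) := by
        rintro u ⟨huK, huv⟩
        by_cases h1 : u ∈ A i
        · exact Or.inl ⟨huK, h1⟩
        · exact Or.inr ⟨huK, hx u huK huv h1⟩
      calc ({u | u ∈ K ∧ ¬ G.Adj v u} : Set V).ncard
          ≤ _ := Set.ncard_le_ncard hsub (Set.toFinite _)
        _ ≤ _ + _ := Set.ncard_union_le _ _
        _ ≤ 1 + 1 := by gcongr; exacts [subcard _ hKi, subcard _ hKj]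
    have hW : ¬ ({u | u ∈ K ∧ G.Adj v u ∧ u ∉ A i} : Set V).Subsingleton := by
      intro hWsub
      have hsub : K ⊆ ({u | u ∈ K ∧ ¬ G.Adj v u} ∪ {u | u ∈ K ∧ G.Adj v u ∧ u ∉ A i}) := by
        intro u huK
        by_cases h1 : G.Adj v u
        · by_cases h2 : u ∈ A i
          · have : u = s := hKpart i u huK s hsK h2 hsAi
            exact absurd (this ▸ h1) hvs
          · exact Or.inr ⟨huK, h1, h2⟩
        · exact Or.inl ⟨huK, h1⟩
      have : (5 : ℕ) ≤ 2 + 1 := by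
        calc (5:ℕ) ≤ K.ncard := hK5
          _ ≤ _ := Set.ncard_le_ncard hsub (Set.toFinite _)
          _ ≤ _ + _ := Set.ncard_union_le _ _
          _ ≤ 2 + 1 := by gcongr; exact subcard _ hWsub
      omega
    obtain ⟨w1, ⟨hw1K, hvw1, hw1i⟩, w2, ⟨hw2K, hvw2, hw2i⟩, hw12⟩ :=
      Set.not_subsingleton_iff.1 hW
    obtain ⟨k1, hk1⟩ := hKA w1 hw1K
    obtain ⟨k2, hk2⟩ := hKA w2 hw2K
    have hk1i : k1 ≠ i := fun h => hw1i (h ▸ hk1)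
    have hk2i : k2 ≠ i := fun h => hw2i (h ▸ hk2)
    have hsw1 : s ≠ w1 := fun h => hvs (h ▸ hvw1)
    have hsw2 : s ≠ w2 := fun h => hvs (h ▸ hvw2)
    exact forbidden G hfree s w1 w2 v a
      (hKadj s hsK w1 hw1K hsw1)
      (hKadj s hsK w2 hw2K hsw2)
      (fun h => hvs h.symm)
      (fun h => ((hadj i i s hsAi a hai).1 h) rfl)
      (hKadj w1 hw1K w2 hw2K hw12)
      hvw1.symm
      ((hadj k1 i w1 hk1 a hai).2 hk1i)
      hvw2.symm
      ((hadj k2 i w2 hk2 a hai).2 hk2i)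
      hva

theorem statement4 {V : Type*} [Fintype V] (G : SimpleGraph V)
    (hfree : _root_.Free co2P1P3 G) (K : Set V) (hK : K.ncard = 5)
    (hKadj : ∀ u ∈ K, ∀ v ∈ K, u ≠ v → G.Adj u v)
    (L : Set V)
    (hL : L = K ∪ {v | v ∉ K ∧ {u ∈ K | ¬ G.Adj v u}.ncard ≤ 1})
    (p : ℕ) (A : Fin p → Set V)
    (hunion : (⋃ i, A i) = L)
    (hdisj : ∀ i j, i ≠ j → Disjoint (A i) (A j))
    (hadj : ∀ i j, ∀ u ∈ A i, ∀ v ∈ A j, (G.Adj u v ↔ i ≠ j))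
    (v : V) (hv : v ∉ L) (i j : Fin p)
    (hi : ∃ u ∈ A i, G.Adj v u) (hj : ∃ u ∈ A j, G.Adj v u) :
    i = j := by
  by_contra hij
  obtain ⟨a, hai, hva⟩ := hi
  obtain ⟨b, hbj, hvb⟩ := hj
  rw [hL] at hv
  have hvK : v ∉ K := fun h => hv (Or.inl h)
  have hN2 : ¬ ({u | u ∈ K ∧ ¬ G.Adj v u} : Set V).ncard ≤ 1 :=
    fun h => hv (Or.inr ⟨hvK, h⟩)
  have hKA : ∀ u ∈ K, ∃ k, u ∈ A k := by
    intro u hu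
    have : u ∈ ⋃ k, A k := by rw [hunion, hL]; exact Or.inl hu
    exact Set.mem_iUnion.1 this
  have hK5 : 5 ≤ K.ncard := le_of_eq hK.symm
  have subcard : ∀ (S : Set V), S.Subsingleton → S.ncard ≤ 1 :=
    fun S hS => (Set.ncard_le_one_iff (Set.toFinite _)).2 fun ha hb => hS ha hb
  by_cases hM : ({u | u ∈ K ∧ ¬ G.Adj v u ∧ u ∉ A i ∧ u ∉ A j} : Set V).Subsingleton
  · -- some non-neighbour of v in K lies in A i or A j
    obtain ⟨s, ⟨hsK, hvs⟩, hsA⟩ : ∃ s, (s ∈ K ∧ ¬ G.Adj v s) ∧ (s ∈ A i ∨ s ∈ A j) := by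
      by_contra h
      push_neg at h
      have hsub : ({u | u ∈ K ∧ ¬ G.Adj v u} : Set V) ⊆
          {u | u ∈ K ∧ ¬ G.Adj v u ∧ u ∉ A i ∧ u ∉ A j} := by
        rintro u ⟨huK, huv⟩
        have := h u ⟨huK, huv⟩
        exact ⟨huK, huv, this.1, this.2⟩
      exact hN2 (le_trans (Set.ncard_le_ncard hsub (Set.toFinite _)) (subcard _ hM))
    rcases hsA with hsAi | hsAj
    · exact sided G hfree K hKadj hK5 A hKA hadj v hvK i j hij a hai hva b hbj hvb
        s hsK hvs hsAi hM
    · have hM' : ({u | u ∈ K ∧ ¬ G.Adj v u ∧ u ∉ A j ∧ u ∉ A i} : Set V).Subsingleton :=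
        fun u hu w hw => hM ⟨hu.1, hu.2.1, hu.2.2.2, hu.2.2.1⟩ ⟨hw.1, hw.2.1, hw.2.2.2, hw.2.2.1⟩
      exact sided G hfree K hKadj hK5 A hKA hadj v hvK j i (Ne.symm hij) b hbj hvb a hai hva
        s hsK hvs hsAj hM'
  · -- two non-neighbours of v in K outside A i ∪ A j
    obtain ⟨x, ⟨hxK, hvx, hxi, hxj⟩, y, ⟨hyK, hvy, hyi, hyj⟩, hxy⟩ :=
      Set.not_subsingleton_iff.1 hM
    obtain ⟨kx, hkx⟩ := hKA x hxK
    obtain ⟨ky, hky⟩ := hKA y hyK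
    have hkxi : kx ≠ i := fun h => hxi (h ▸ hkx)
    have hkxj : kx ≠ j := fun h => hxj (h ▸ hkx)
    have hkyi : ky ≠ i := fun h => hyi (h ▸ hky)
    have hkyj : ky ≠ j := fun h => hyj (h ▸ hky)
    exact forbidden G hfree v a b x y hva hvb hvx hvy
      ((hadj i j a hai b hbj).2 hij)
      ((hadj i kx a hai x hkx).2 (Ne.symm hkxi))
      ((hadj i ky a hai y hky).2 (Ne.symm hkyi))
      ((hadj j kx b hbj x hkx).2 (Ne.symm hkxj))
      ((hadj j ky b hbj y hky).2 (Ne.symm hkyj))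
      (hKadj x hxK y hyK hxy)
end

section
/- Let G be a graph containing a vertex x, and let G^x be the graph obtained from G by adding a new vertex x' whose neighbourhood is exactly the (open) neighbourhood of x. Then G^x is ($\overline{2P_1+P_3}$, P_5)-free if and only if G is ($\overline{2P_1+P_3}$, P_5)-free. -/
open SimpleGraph

lemma dup_free_iff {V W : Type*} (G : SimpleGraph V) (x : V) (G' : SimpleGraph (V ⊕ Unit))
    (h1 : ∀ v w : V, G'.Adj (Sum.inl v) (Sum.inl w) ↔ G.Adj v w)
    (h2 : ∀ v : V, G'.Adj (Sum.inl v) (Sum.inr ()) ↔ G.Adj v x)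
    (H : SimpleGraph W)
    (hH : ∀ a b : W, a ≠ b → ¬H.Adj a b → ∃ c, ¬(H.Adj a c ↔ H.Adj b c)) :
    _root_.Free H G' ↔ _root_.Free H G := by
  constructor
  · intro h
    constructor
    intro f
    exact h.false ⟨⟨fun w => Sum.inl (f w), fun a b hab => f.injective (Sum.inl_injective hab)⟩,
      fun {a b} => (h1 (f a) (f b)).trans f.map_adj_iff⟩
  · intro h
    constructor
    intro f
    by_cases hcase : (∃ w0, f w0 = Sum.inr ()) ∧ (∃ w1, f w1 = Sum.inl x)
    · obtain ⟨⟨w0, hw0⟩, ⟨w1, hw1⟩⟩ := hcase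
      have hne : w0 ≠ w1 := by
        rintro rfl; rw [hw0] at hw1; exact Sum.inr_ne_inl hw1
      have hnadj : ¬H.Adj w0 w1 := by
        intro hadj
        have h' : G'.Adj (f w0) (f w1) := f.map_adj_iff.mpr hadj
        rw [hw0, hw1] at h'
        exact G.irrefl ((h2 x).mp h'.symm)
      obtain ⟨c, hc⟩ := hH w0 w1 hne hnadj
      apply hc
      by_cases hc0 : c = w0
      · subst hc0
        exact iff_of_false (H.irrefl) (fun h' => hnadj h'.symm)
      by_cases hc1 : c = w1
      · subst hc1
        exact iff_of_false hnadj (H.irrefl)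
      · -- f c = inl v with v ≠ x
        rcases hfc : f c with v | u
        · have hvx : v ≠ x := by
            rintro rfl
            exact hc1 (f.injective (hfc.trans hw1.symm))
          have e0 : H.Adj w0 c ↔ G.Adj v x := by
            rw [← f.map_adj_iff, hw0, hfc, adj_comm, h2]
          have e1 : H.Adj w1 c ↔ G.Adj v x := by
            rw [← f.map_adj_iff, hw1, hfc, h1, adj_comm]
          rw [e0, e1]
        · exact absurd (f.injective (hfc.trans (by cases u; exact hw0.symm))) hc0
    · -- build embedding into G
      set g : W → V := fun w => Sum.elim id (fun _ => x) (f w) with hg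
      have hginj : Function.Injective g := by
        intro a b hab
        rcases ha : f a with va | ua <;> rcases hb : f b with vb | ub <;>
          simp only [hg, ha, hb, Sum.elim_inl, Sum.elim_inr, id] at hab
        · exact f.injective (ha.trans (hab ▸ hb.symm))
        · exact absurd ⟨⟨b, by cases ub; exact hb⟩, ⟨a, hab ▸ ha⟩⟩ hcase
        · exact absurd ⟨⟨a, by cases ua; exact ha⟩, ⟨b, hab ▸ hb⟩⟩ hcase
        · exact f.injective (by cases ua; cases ub; exact ha.trans hb.symm)
      have hadj : ∀ a b, G.Adj (g a) (g b) ↔ H.Adj a b := by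
        intro a b
        rw [← f.map_adj_iff]
        rcases ha : f a with va | ua <;> rcases hb : f b with vb | ub <;>
          simp only [hg, ha, hb, Sum.elim_inl, Sum.elim_inr, id]
        · exact (h1 va vb).symm
        · cases ub; exact (h2 va).symm
        · cases ua; rw [adj_comm, G'.adj_comm, h2]
        · cases ua; cases ub
          exact iff_of_false (G.irrefl) (G'.irrefl)
      exact h.false ⟨⟨g, hginj⟩, fun {a b} => hadj a b⟩

lemma co_twins : ∀ a b : Fin 5, a ≠ b → ¬co2P1P3.Adj a b →
    ∃ c, ¬(co2P1P3.Adj a c ↔ co2P1P3.Adj b c) := by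
  simp only [co2P1P3, twoP1PlusP3, SimpleGraph.compl_adj, SimpleGraph.fromRel_adj]
  decide

lemma path_twins : ∀ a b : Fin 5, a ≠ b → ¬(SimpleGraph.pathGraph 5).Adj a b →
    ∃ c, ¬((SimpleGraph.pathGraph 5).Adj a c ↔ (SimpleGraph.pathGraph 5).Adj b c) := by
  simp only [SimpleGraph.pathGraph_adj]
  decide

theorem statement5 {V : Type*} [Fintype V] (G : SimpleGraph V) (x : V)
    (G' : SimpleGraph (V ⊕ Unit))
    (h1 : ∀ v w : V, G'.Adj (Sum.inl v) (Sum.inl w) ↔ G.Adj v w)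
    (h2 : ∀ v : V, G'.Adj (Sum.inl v) (Sum.inr ()) ↔ G.Adj v x) :
    (_root_.Free co2P1P3 G' ∧ _root_.Free (SimpleGraph.pathGraph 5) G') ↔
      (_root_.Free co2P1P3 G ∧ _root_.Free (SimpleGraph.pathGraph 5) G) := by
  rw [dup_free_iff G x G' h1 h2 co2P1P3 co_twins,
    dup_free_iff G x G' h1 h2 (SimpleGraph.pathGraph 5) path_twins]
end

section
/- Let G be a ($\overline{2P_1+P_3}$, P_5)-free graph, let K be a set of five pairwise adjacent vertices of G, and let A_1,…,A_p,N_1,…,N_p,B be a K_5-decomposition of G with respect to K. If at least three of the sets N_1,…,N_p are non-empty, then either N_i is complete to N_j for all distinct indices i,j, or N_i is anti-complete to N_j for all distinct indices i,j. -/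
open SimpleGraph

lemma exists_fourth {p : ℕ} (hp : 5 ≤ p) (a b c : Fin p) :
    ∃ f : Fin p, f ≠ a ∧ f ≠ b ∧ f ≠ c := by
  have h3 : ({a, b, c} : Finset (Fin p)).card ≤ 3 := by
    apply (Finset.card_insert_le _ _).trans
    have := Finset.card_insert_le b ({c} : Finset (Fin p))
    simp at this ⊢
    omega
  have hne : (({a, b, c} : Finset (Fin p))ᶜ).Nonempty := by
    rw [← Finset.card_pos, Finset.card_compl, Fintype.card_fin]
    omega
  obtain ⟨f, hf⟩ := hne
  simp only [Finset.mem_compl, Finset.mem_insert, Finset.mem_singleton] at hf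
  push_neg at hf
  exact ⟨f, hf.1, hf.2.1, hf.2.2⟩

lemma noP5 {V : Type*} (G : SimpleGraph V) (h : _root_.Free (SimpleGraph.pathGraph 5) G)
    (v0 v1 v2 v3 v4 : V)
    (a01 : G.Adj v0 v1) (a12 : G.Adj v1 v2) (a23 : G.Adj v2 v3) (a34 : G.Adj v3 v4)
    (n02 : ¬ G.Adj v0 v2) (n03 : ¬ G.Adj v0 v3) (n04 : ¬ G.Adj v0 v4)
    (n13 : ¬ G.Adj v1 v3) (n14 : ¬ G.Adj v1 v4) (n24 : ¬ G.Adj v2 v4)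
    (d02 : v0 ≠ v2) (d03 : v0 ≠ v3) (d04 : v0 ≠ v4)
    (d13 : v1 ≠ v3) (d14 : v1 ≠ v4) (d24 : v2 ≠ v4) : False := by
  have d01 : v0 ≠ v1 := a01.ne
  have d12 : v1 ≠ v2 := a12.ne
  have d23 : v2 ≠ v3 := a23.ne
  have d34 : v3 ≠ v4 := a34.ne
  have a10 := a01.symm; have a21 := a12.symm; have a32 := a23.symm; have a43 := a34.symm
  have n20 : ¬ G.Adj v2 v0 := fun h => n02 h.symm
  have n30 : ¬ G.Adj v3 v0 := fun h => n03 h.symm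
  have n40 : ¬ G.Adj v4 v0 := fun h => n04 h.symm
  have n31 : ¬ G.Adj v3 v1 := fun h => n13 h.symm
  have n41 : ¬ G.Adj v4 v1 := fun h => n14 h.symm
  have n42 : ¬ G.Adj v4 v2 := fun h => n24 h.symm
  have d10 := d01.symm; have d21 := d12.symm; have d32 := d23.symm; have d43 := d34.symm
  have d20 := d02.symm; have d30 := d03.symm; have d40 := d04.symm
  have d31 := d13.symm; have d41 := d14.symm; have d42 := d24.symm
  refine h.elim ⟨⟨![v0, v1, v2, v3, v4], ?_⟩, ?_⟩
  · intro i j hij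
    fin_cases i <;> fin_cases j <;> simp_all
  · intro i j
    change G.Adj (![v0, v1, v2, v3, v4] i) (![v0, v1, v2, v3, v4] j) ↔ (SimpleGraph.pathGraph 5).Adj i j
    fin_cases i <;> fin_cases j <;>
      first
      | (simp_all [SimpleGraph.pathGraph_adj]; try decide)
      | decide


theorem statement6 {V : Type*} [Fintype V] (G : SimpleGraph V)
    (hfree1 : _root_.Free co2P1P3 G) (hfree2 : _root_.Free (SimpleGraph.pathGraph 5) G)
    (K : Set V) (hK : K.ncard = 5)
    (hKadj : ∀ u ∈ K, ∀ v ∈ K, u ≠ v → G.Adj u v)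
    (p : ℕ) (A N : Fin p → Set V) (B : Set V)
    (hdec : K5Decomp G K p A N B)
    (h3 : ∃ i j k : Fin p, i ≠ j ∧ i ≠ k ∧ j ≠ k ∧
      (N i).Nonempty ∧ (N j).Nonempty ∧ (N k).Nonempty) :
    (∀ i j, i ≠ j → ∀ u ∈ N i, ∀ v ∈ N j, G.Adj u v) ∨
      (∀ i j, i ≠ j → ∀ u ∈ N i, ∀ v ∈ N j, ¬ G.Adj u v) := by
  obtain ⟨hp, -, hAA, hNN, hAN, -, -, hAne, -, hadjA, hNnbr, hNanti, -⟩ := hdec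
  -- basic distinctness helpers
  have neAN : ∀ {i j : Fin p} {x y : V}, x ∈ A i → y ∈ N j → x ≠ y := by
    intro i j x y hx hy h
    exact Set.disjoint_left.mp (hAN i j) hx (h ▸ hy)
  have neNN : ∀ {i j : Fin p} {x y : V}, i ≠ j → x ∈ N i → y ∈ N j → x ≠ y := by
    intro i j x y hij hx hy h
    exact Set.disjoint_left.mp (hNN i j hij) hx (h ▸ hy)
  -- no vertex of (N i) is adjacent to a vertex of (A j) for i ≠ j
  have noNA : ∀ {i j : Fin p}, i ≠ j → ∀ {x y : V}, x ∈ N i → y ∈ A j → ¬ G.Adj x y := by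
    intro i j hij x y hx hy
    exact hNanti i j hij x hx y hy
  have noAN : ∀ {i j : Fin p}, j ≠ i → ∀ {x y : V}, x ∈ A i → y ∈ N j → ¬ G.Adj x y := by
    intro i j hji x y hx hy h
    exact hNanti j i hji y hy x hx h.symm
  -- HP: no induced P3 across three pairwise distinct N-sets: adjacency propagates
  have HP : ∀ a b c : Fin p, a ≠ b → b ≠ c → a ≠ c →
      ∀ x ∈ N a, ∀ y ∈ N b, ∀ z ∈ N c, G.Adj x y → G.Adj y z → G.Adj x z := by
    intro a b c hab hbc hac x hx y hy z hz hxy hyz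
    by_contra hxz
    obtain ⟨e, he, hex⟩ := hNnbr a x hx
    obtain ⟨f, hfa, hfb, hfc⟩ := exists_fourth hp a b c
    obtain ⟨d, hd⟩ := hAne f
    exact noP5 G hfree2 d e x y z
      ((hadjA f a d hd e he).mpr hfa)
      hex.symm hxy hyz
      (noAN hfa.symm hd hx) (noAN hfb.symm hd hy) (noAN hfc.symm hd hz)
      (noAN hab.symm he hy) (noAN hac.symm he hz) hxz
      (neAN hd hx) (neAN hd hy) (neAN hd hz)
      (neAN he hy) (neAN he hz) (neNN hac hx hz)
  -- H3: if u-v is an edge across N a, N b, then any w in a third N c sees u or v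
  have H3 : ∀ a b c : Fin p, a ≠ b → c ≠ a → c ≠ b →
      ∀ u ∈ N a, ∀ v ∈ N b, ∀ w ∈ N c, G.Adj u v → G.Adj w u ∨ G.Adj w v := by
    intro a b c hab hca hcb u hu v hv w hw huv
    by_contra hcon
    push_neg at hcon
    obtain ⟨hwu, hwv⟩ := hcon
    obtain ⟨b0, hb0, hvb0⟩ := hNnbr b v hv
    obtain ⟨c0, hc0, hwc0⟩ := hNnbr c w hw
    exact noP5 G hfree2 u v b0 c0 w
      huv hvb0 ((hadjA b c b0 hb0 c0 hc0).mpr hcb.symm) hwc0.symm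
      (noNA hab hu hb0) (noNA hca.symm hu hc0)
      (fun h => hwu h.symm)
      (noNA hcb.symm hv hc0) (fun h => hwv h.symm)
      (noAN hcb hb0 hw)
      (neAN hb0 hu).symm (neAN hc0 hu).symm (neNN (Ne.symm hca) hu hw)
      (neAN hc0 hv).symm (neNN hcb.symm hv hw) (neAN hb0 hw)
  -- C: w in a third set is adjacent to both endpoints of a cross edge
  have C : ∀ a b c : Fin p, a ≠ b → c ≠ a → c ≠ b →
      ∀ u ∈ N a, ∀ v ∈ N b, ∀ w ∈ N c, G.Adj u v → G.Adj w u ∧ G.Adj w v := by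
    intro a b c hab hca hcb u hu v hv w hw huv
    rcases H3 a b c hab hca hcb u hu v hv w hw huv with hwu | hwv
    · exact ⟨hwu, HP c a b hca hab hcb w hw u hu v hv hwu huv⟩
    · exact ⟨HP c b a hcb hab.symm hca w hw v hv u hu hwv huv.symm, hwv⟩
  by_cases hE : ∃ a b : Fin p, a ≠ b ∧ ∃ u ∈ N a, ∃ v ∈ N b, G.Adj u v
  · left
    obtain ⟨a, b, hab, u0, hu0, v0, hv0, huv0⟩ := hE
    -- third nonempty set avoiding a and b
    have hm : ∃ m : Fin p, m ≠ a ∧ m ≠ b ∧ (N m).Nonempty := by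
      obtain ⟨i, j, k, hij, hik, hjk, hNi, hNj, hNk⟩ := h3
      by_cases h1 : i ≠ a ∧ i ≠ b
      · exact ⟨i, h1.1, h1.2, hNi⟩
      by_cases h2 : j ≠ a ∧ j ≠ b
      · exact ⟨j, h2.1, h2.2, hNj⟩
      push_neg at h1 h2
      refine ⟨k, ?_, ?_, hNk⟩
      · intro h
        subst h
        have hib : i = b := h1 hik
        have hjb : j = b := h2 hjk
        exact hij (hib.trans hjb.symm)
      · intro h
        subst h
        by_cases hia : i = a
        · by_cases hja : j = a
          · exact hij (hia.trans hja.symm)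
          · exact hjk (h2 hja)
        · exact hik (h1 hia)
    obtain ⟨m, hma, hmb, z, hz⟩ := hm
    have hz0 : G.Adj z u0 ∧ G.Adj z v0 := C a b m hab hma hmb u0 hu0 v0 hv0 z hz huv0
    -- T1: any w in a set other than a, b is adjacent to both u0 and v0
    have T1 : ∀ c : Fin p, c ≠ a → c ≠ b → ∀ w ∈ N c, G.Adj w u0 ∧ G.Adj w v0 :=
      fun c hca hcb w hw => C a b c hab hca hcb u0 hu0 v0 hv0 w hw huv0
    -- T2: N a is complete to N b
    have T2 : ∀ x ∈ N a, ∀ y ∈ N b, G.Adj x y := by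
      intro x hx y hy
      have hzx : G.Adj x z ∧ G.Adj x v0 :=
        C m b a hmb hma.symm hab z hz v0 hv0 x hx hz0.2
      have hzy : G.Adj y z ∧ G.Adj y u0 :=
        C m a b hma hmb.symm hab.symm z hz u0 hu0 y hy hz0.1
      exact (C a m b hma.symm hab.symm hmb.symm x hx z hz y hy hzx.1).1.symm
    intro k l hkl x hx y hy
    by_cases hka : k = a
    · subst hka
      by_cases hlb : l = b
      · subst hlb; exact T2 x hx y hy
      · -- l ∉ {k, b}; y is adjacent to v0, use edge y–v0 with third set k
        have hyv : G.Adj y v0 := (T1 l hkl.symm hlb y hy).2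
        exact (C l b k hlb hkl hab y hy v0 hv0 x hx hyv).1
    · by_cases hkb : k = b
      · subst hkb
        by_cases hla : l = a
        · subst hla; exact (T2 y hy x hx).symm
        · have hyu : G.Adj y u0 := (T1 l hla hkl.symm y hy).1
          exact (C l a k hla hkl hab.symm y hy u0 hu0 x hx hyu).1
      · -- k ∉ {a, b}
        have hxu : G.Adj x u0 := (T1 k hka hkb x hx).1
        have hxv : G.Adj x v0 := (T1 k hka hkb x hx).2
        by_cases hla : l = a
        · subst hla
          exact ((C k b l hkb hkl.symm hab x hx v0 hv0 y hy hxv).1).symm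
        · by_cases hlb : l = b
          · subst hlb
            exact ((C k a l hka hkl.symm hab.symm x hx u0 hu0 y hy hxu).1).symm
          · exact ((C k a l hka hkl.symm hla x hx u0 hu0 y hy hxu).1).symm
  · right
    intro i j hij u hu v hv hadj
    exact hE ⟨i, j, hij, u, hu, v, hv, hadj⟩
end

section
/- Let G be a connected ($\overline{2P_1+P_3}$, P_5)-free graph, let K be a set of five pairwise adjacent vertices of G, and let A_1,…,A_p,N_1,…,N_p,B be a K_5-decomposition of G with respect to K. If at least three of the sets N_1,…,N_p are non-empty and the sets N_1,…,N_p are pairwise anti-complete, then B is empty. -/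
open SimpleGraph

lemma no_induced_p5 {V : Type*} (G : SimpleGraph V)
    (hfree : IsEmpty (SimpleGraph.pathGraph 5 ↪g G))
    (v0 v1 v2 v3 v4 : V)
    (e01 : G.Adj v0 v1) (e12 : G.Adj v1 v2) (e23 : G.Adj v2 v3) (e34 : G.Adj v3 v4)
    (n02 : ¬G.Adj v0 v2) (n03 : ¬G.Adj v0 v3) (n04 : ¬G.Adj v0 v4)
    (n13 : ¬G.Adj v1 v3) (n14 : ¬G.Adj v1 v4) (n24 : ¬G.Adj v2 v4) : False := by
  have d02 : v0 ≠ v2 := fun h => n03 (h ▸ e23)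
  have d03 : v0 ≠ v3 := fun h => n04 (h ▸ e34)
  have d04 : v0 ≠ v4 := fun h => n03 (by rw [h]; exact e34.symm)
  have d13 : v1 ≠ v3 := fun h => n14 (h ▸ e34)
  have d14 : v1 ≠ v4 := fun h => n04 (h ▸ e01)
  have d24 : v2 ≠ v4 := fun h => n14 (h ▸ e12)
  have n20 : ¬G.Adj v2 v0 := fun h => n02 h.symm
  have n30 : ¬G.Adj v3 v0 := fun h => n03 h.symm
  have n40 : ¬G.Adj v4 v0 := fun h => n04 h.symm
  have n31 : ¬G.Adj v3 v1 := fun h => n13 h.symm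
  have n41 : ¬G.Adj v4 v1 := fun h => n14 h.symm
  have n42 : ¬G.Adj v4 v2 := fun h => n24 h.symm
  let f : Fin 5 → V := ![v0, v1, v2, v3, v4]
  have hinj : Function.Injective f := by
    intro a b hab
    fin_cases a <;> fin_cases b <;>
      simp_all [f, e01.ne, e12.ne, e23.ne, e34.ne, d02, d03, d04, d13, d14, d24,
        e01.ne', e12.ne', e23.ne', e34.ne', d02.symm, d03.symm, d04.symm, d13.symm,
        d14.symm, d24.symm]
  refine hfree.elim ⟨⟨f, hinj⟩, ?_⟩
  intro a b
  fin_cases a <;> fin_cases b <;>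
    simp [f, pathGraph_adj, e01, e12, e23, e34, e01.symm, e12.symm, e23.symm, e34.symm,
      n02, n03, n04, n13, n14, n24, n20, n30, n40, n31, n41, n42] <;> decide

theorem statement7 {V : Type*} [Fintype V] (G : SimpleGraph V)
    (hconn : G.Connected)
    (hfree1 : _root_.Free co2P1P3 G) (hfree2 : _root_.Free (SimpleGraph.pathGraph 5) G)
    (K : Set V) (hK : K.ncard = 5)
    (hKadj : ∀ u ∈ K, ∀ v ∈ K, u ≠ v → G.Adj u v)
    (p : ℕ) (A N : Fin p → Set V) (B : Set V)
    (hdec : K5Decomp G K p A N B)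
    (h3 : ∃ i j k : Fin p, i ≠ j ∧ i ≠ k ∧ j ≠ k ∧
      (N i).Nonempty ∧ (N j).Nonempty ∧ (N k).Nonempty)
    (hanti : ∀ i j, i ≠ j → ∀ u ∈ N i, ∀ v ∈ N j, ¬ G.Adj u v) :
    B = ∅ := by
  obtain ⟨hp5, hcover, hAA, hNN, hAN, hAB, hNB, hAne, hKA, hAadj, hNnbr, hNanti, hBanti⟩ := hdec
  by_contra hBne
  obtain ⟨b0, hb0⟩ := Set.nonempty_iff_ne_empty.mpr hBne
  have hp0 : 0 < p := by omega
  obtain ⟨a0, ha0⟩ := hAne ⟨0, hp0⟩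
  have ha0B : a0 ∉ B := fun h => Set.disjoint_left.mp (hAB ⟨0, hp0⟩) ha0 h
  obtain ⟨w⟩ := hconn.preconnected a0 b0
  obtain ⟨d, _, hdf, hds⟩ := w.exists_boundary_dart Bᶜ ha0B (not_not_intro hb0)
  set x := d.fst with hxdef
  set b := d.snd with hbdef
  have hxb : G.Adj x b := d.adj
  have hbB : b ∈ B := by simpa using hds
  have hxB : x ∉ B := hdf
  have hx : x ∈ (⋃ i, A i) ∪ (⋃ i, N i) ∪ B := by rw [hcover]; exact Set.mem_univ x
  rcases hx with (hx | hx) | hx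
  · obtain ⟨i, hxA⟩ := Set.mem_iUnion.mp hx
    exact hBanti b hbB i x hxA hxb.symm
  · obtain ⟨l, hxNl⟩ := Set.mem_iUnion.mp hx
    obtain ⟨i, j, k, hij, hik, hjk, hNi, hNj, hNk⟩ := h3
    have hmm : ∃ m m', m ≠ m' ∧ m ≠ l ∧ m' ≠ l ∧ (N m).Nonempty ∧ (N m').Nonempty := by
      by_cases h1 : i = l
      · exact ⟨j, k, hjk, by rw [← h1]; exact hij.symm, by rw [← h1]; exact hik.symm, hNj, hNk⟩
      · by_cases h2 : j = l
        · exact ⟨i, k, hik, h1, by rw [← h2]; exact hjk.symm, hNi, hNk⟩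
        · exact ⟨i, j, hij, h1, h2, hNi, hNj⟩
    obtain ⟨m, m', hmm', hml, hm'l, ⟨nm, hnm⟩, ⟨nm', hnm'⟩⟩ := hmm
    obtain ⟨al, halA, hxal⟩ := hNnbr l x hxNl
    obtain ⟨am, hamA, hnmam⟩ := hNnbr m nm hnm
    obtain ⟨am', ham'A, hnm'am'⟩ := hNnbr m' nm' hnm'
    by_cases hb1 : G.Adj b nm
    · by_cases hb2 : G.Adj b nm'
      · exact no_induced_p5 G hfree2 al am nm b nm'
          ((hAadj l m al halA am hamA).mpr hml.symm)
          hnmam.symm hb1.symm hb2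
          (fun h => hNanti m l hml nm hnm al halA h.symm)
          (fun h => hBanti b hbB l al halA h.symm)
          (fun h => hNanti m' l hm'l nm' hnm' al halA h.symm)
          (fun h => hBanti b hbB m am hamA h.symm)
          (fun h => hNanti m' m hmm'.symm nm' hnm' am hamA h.symm)
          (hanti m m' hmm' nm hnm nm' hnm')
      · exact no_induced_p5 G hfree2 b x al am' nm'
          hxb.symm hxal ((hAadj l m' al halA am' ham'A).mpr hm'l.symm) hnm'am'.symm
          (hBanti b hbB l al halA)
          (hBanti b hbB m' am' ham'A)
          hb2
          (hNanti l m' hm'l.symm x hxNl am' ham'A)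
          (hanti l m' hm'l.symm x hxNl nm' hnm')
          (fun h => hNanti m' l hm'l nm' hnm' al halA h.symm)
    · exact no_induced_p5 G hfree2 b x al am nm
        hxb.symm hxal ((hAadj l m al halA am hamA).mpr hml.symm) hnmam.symm
        (hBanti b hbB l al halA)
        (hBanti b hbB m am hamA)
        hb1
        (hNanti l m hml.symm x hxNl am hamA)
        (hanti l m hml.symm x hxNl nm hnm)
        (fun h => hNanti m l hml nm hnm al halA h.symm)
  · exact hxB hx
end

section
/- Let G be a ($\overline{2P_1+P_3}$, P_5)-free graph, let K be a set of five pairwise adjacent vertices of G, and let A_1,…,A_p,N_1,…,N_p,B be a K_5-decomposition of G with respect to K. Suppose at least three of the sets N_1,…,N_p are non-empty and the sets N_1,…,N_p are pairwise anti-complete. Then for every i and every two vertices x, y ∈ N_i, the neighbourhoods of x and y inside A_i are comparable: either N(x) ∩ A_i ⊆ N(y) ∩ A_i or N(y) ∩ A_i ⊆ N(x) ∩ A_i. -/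
open SimpleGraph

lemma inducedP5 {V : Type*} (G : SimpleGraph V) (v0 v1 v2 v3 v4 : V)
    (h01 : G.Adj v0 v1) (h12 : G.Adj v1 v2) (h23 : G.Adj v2 v3) (h34 : G.Adj v3 v4)
    (h02 : ¬G.Adj v0 v2) (h03 : ¬G.Adj v0 v3) (h04 : ¬G.Adj v0 v4)
    (h13 : ¬G.Adj v1 v3) (h14 : ¬G.Adj v1 v4) (h24 : ¬G.Adj v2 v4) :
    Nonempty (SimpleGraph.pathGraph 5 ↪g G) := by
  have n01 : v0 ≠ v1 := h01.ne
  have n12 : v1 ≠ v2 := h12.ne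
  have n23 : v2 ≠ v3 := h23.ne
  have n34 : v3 ≠ v4 := h34.ne
  have n02 : v0 ≠ v2 := by rintro rfl; exact h03 h23
  have n03 : v0 ≠ v3 := by rintro rfl; exact h04 h34
  have n04 : v0 ≠ v4 := by rintro rfl; exact h14 h01.symm
  have n13 : v1 ≠ v3 := by rintro rfl; exact h03 h01
  have n14 : v1 ≠ v4 := by rintro rfl; exact h24 h12.symm
  have n24 : v2 ≠ v4 := by rintro rfl; exact h14 h12
  have s01 := h01.symm; have s12 := h12.symm; have s23 := h23.symm; have s34 := h34.symm
  have m02 : ¬G.Adj v2 v0 := fun h => h02 h.symm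
  have m03 : ¬G.Adj v3 v0 := fun h => h03 h.symm
  have m04 : ¬G.Adj v4 v0 := fun h => h04 h.symm
  have m13 : ¬G.Adj v3 v1 := fun h => h13 h.symm
  have m14 : ¬G.Adj v4 v1 := fun h => h14 h.symm
  have m24 : ¬G.Adj v4 v2 := fun h => h24 h.symm
  refine ⟨⟨⟨![v0, v1, v2, v3, v4], ?_⟩, ?_⟩⟩
  · intro a b hab
    fin_cases a <;> fin_cases b <;>
      simp_all [n01, n12, n23, n34, n02, n03, n04, n13, n14, n24]
  · intro a b
    fin_cases a <;> fin_cases b <;>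
      simp [pathGraph_adj, h01, h12, h23, h34, s01, s12, s23, s34,
        h02, h03, h04, h13, h14, h24, m02, m03, m04, m13, m14, m24, G.irrefl]
    all_goals assumption

theorem statement8 {V : Type*} [Fintype V] (G : SimpleGraph V)
    (hfree1 : _root_.Free co2P1P3 G) (hfree2 : _root_.Free (SimpleGraph.pathGraph 5) G)
    (K : Set V) (hK : K.ncard = 5)
    (hKadj : ∀ u ∈ K, ∀ v ∈ K, u ≠ v → G.Adj u v)
    (p : ℕ) (A N : Fin p → Set V) (B : Set V)
    (hdec : K5Decomp G K p A N B)
    (h3 : ∃ i j k : Fin p, i ≠ j ∧ i ≠ k ∧ j ≠ k ∧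
      (N i).Nonempty ∧ (N j).Nonempty ∧ (N k).Nonempty)
    (hanti : ∀ i j, i ≠ j → ∀ u ∈ N i, ∀ v ∈ N j, ¬ G.Adj u v) :
    ∀ i, ∀ x ∈ N i, ∀ y ∈ N i,
      G.neighborSet x ∩ A i ⊆ G.neighborSet y ∩ A i ∨
        G.neighborSet y ∩ A i ⊆ G.neighborSet x ∩ A i := by
  obtain ⟨_, _, _, hNN, hAN, _, _, _, _, hadjA, hNA, hNAj, _⟩ := hdec
  intro i x hx y hy
  by_contra hcon
  push_neg at hcon
  obtain ⟨h1, h2⟩ := hcon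
  obtain ⟨a, ha1, ha2⟩ := Set.not_subset.mp h1
  obtain ⟨b, hb1, hb2⟩ := Set.not_subset.mp h2
  obtain ⟨hxa, haA⟩ := ha1
  obtain ⟨hyb, hbA⟩ := hb1
  have hya : ¬ G.Adj y a := fun h => ha2 ⟨h, haA⟩
  have hxb : ¬ G.Adj x b := fun h => hb2 ⟨h, hbA⟩
  -- find an index j ≠ i with N j nonempty
  obtain ⟨i1, j1, k1, hij1, hik1, hjk1, hNi1, hNj1, hNk1⟩ := h3
  obtain ⟨j, hji, hNj⟩ : ∃ j, j ≠ i ∧ (N j).Nonempty := by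
    by_cases h : i1 = i
    · exact ⟨j1, fun hh => hij1 (h.trans hh.symm), hNj1⟩
    · exact ⟨i1, h, hNi1⟩
  obtain ⟨z, hz⟩ := hNj
  obtain ⟨c, hc, hzc⟩ := hNA j z hz
  have hij : i ≠ j := fun h => hji h.symm
  -- common non-adjacencies
  have hxc : ¬ G.Adj x c := hNAj i j hij x hx c hc
  have hyc : ¬ G.Adj y c := hNAj i j hij y hy c hc
  have hzb : ¬ G.Adj z b := hNAj j i hji z hz b hbA
  have hzx : ¬ G.Adj z x := hanti j i hji z hz x hx
  have hzy : ¬ G.Adj z y := hanti j i hji z hz y hy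
  have hcb : G.Adj c b := (hadjA j i c hc b hbA).mpr hji
  by_cases hxy : G.Adj x y
  · -- induced path z - c - b - y - x
    have : Nonempty (SimpleGraph.pathGraph 5 ↪g G) :=
      inducedP5 G z c b y x hzc hcb hyb.symm hxy.symm hzb hzy hzx
        (fun h => hyc h.symm) (fun h => hxc h.symm) (fun h => hxb h.symm)
    exact hfree2.false this.some
  · -- induced path x - a - c - b - y
    have hac : G.Adj a c := (hadjA i j a haA c hc).mpr hij
    have hab : ¬ G.Adj a b := fun h => ((hadjA i i a haA b hbA).mp h) rfl
    have : Nonempty (SimpleGraph.pathGraph 5 ↪g G) :=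
      inducedP5 G x a c b y hxa hac hcb hyb.symm hxc hxb hxy hab
        (fun h => hya h.symm) (fun h => hyc h.symm)
    exact hfree2.false this.some
end

section
/- Let G be a connected ($\overline{2P_1+P_3}$, P_5)-free graph, let K be a set of five pairwise adjacent vertices of G, and let A_1,…,A_p,N_1,…,N_p,B be a K_5-decomposition of G with respect to K. Suppose at least three of the sets N_1,…,N_p are non-empty and the sets N_1,…,N_p are pairwise complete. Then B is complete to N_1 ∪ … ∪ N_p, and for every i the set N_i is complete to A_i. -/
open SimpleGraph

lemma noP5_s10 {V : Type*} (G : SimpleGraph V)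
    (hfree : IsEmpty (SimpleGraph.pathGraph 5 ↪g G))
    (a b c d e : V)
    (hab : G.Adj a b) (hbc : G.Adj b c) (hcd : G.Adj c d) (hde : G.Adj d e)
    (hac : ¬G.Adj a c) (had : ¬G.Adj a d) (hae : ¬G.Adj a e)
    (hbd : ¬G.Adj b d) (hbe : ¬G.Adj b e) (hce : ¬G.Adj c e) : False := by
  have nac : a ≠ c := by rintro rfl; exact had hcd
  have nad : a ≠ d := by rintro rfl; exact hae hde
  have nae : a ≠ e := by rintro rfl; exact had hde.symm
  have nbd : b ≠ d := by rintro rfl; exact hbe hde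
  have nbe : b ≠ e := by rintro rfl; exact hbd hde.symm
  have nce : c ≠ e := by rintro rfl; exact hbe hbc
  have hca : ¬G.Adj c a := fun h => hac h.symm
  have hda : ¬G.Adj d a := fun h => had h.symm
  have hea : ¬G.Adj e a := fun h => hae h.symm
  have hdb : ¬G.Adj d b := fun h => hbd h.symm
  have heb : ¬G.Adj e b := fun h => hbe h.symm
  have hec : ¬G.Adj e c := fun h => hce h.symm
  have hinj : Function.Injective ![a, b, c, d, e] := by
    intro x y h
    fin_cases x <;> fin_cases y <;>
      (first
        | rfl
        | exact absurd h hab.ne | exact absurd h.symm hab.ne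
        | exact absurd h hbc.ne | exact absurd h.symm hbc.ne
        | exact absurd h hcd.ne | exact absurd h.symm hcd.ne
        | exact absurd h hde.ne | exact absurd h.symm hde.ne
        | exact absurd h nac | exact absurd h.symm nac
        | exact absurd h nad | exact absurd h.symm nad
        | exact absurd h nae | exact absurd h.symm nae
        | exact absurd h nbd | exact absurd h.symm nbd
        | exact absurd h nbe | exact absurd h.symm nbe
        | exact absurd h nce | exact absurd h.symm nce)
  refine hfree.elim ⟨⟨![a, b, c, d, e], hinj⟩, ?_⟩
  intro x y
  fin_cases x <;> fin_cases y <;>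
    (first
      | exact iff_of_false G.irrefl (by rw [pathGraph_adj]; decide)
      | exact iff_of_true hab (by rw [pathGraph_adj]; decide)
      | exact iff_of_true hab.symm (by rw [pathGraph_adj]; decide)
      | exact iff_of_true hbc (by rw [pathGraph_adj]; decide)
      | exact iff_of_true hbc.symm (by rw [pathGraph_adj]; decide)
      | exact iff_of_true hcd (by rw [pathGraph_adj]; decide)
      | exact iff_of_true hcd.symm (by rw [pathGraph_adj]; decide)
      | exact iff_of_true hde (by rw [pathGraph_adj]; decide)
      | exact iff_of_true hde.symm (by rw [pathGraph_adj]; decide)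
      | exact iff_of_false hac (by rw [pathGraph_adj]; decide)
      | exact iff_of_false hca (by rw [pathGraph_adj]; decide)
      | exact iff_of_false had (by rw [pathGraph_adj]; decide)
      | exact iff_of_false hda (by rw [pathGraph_adj]; decide)
      | exact iff_of_false hae (by rw [pathGraph_adj]; decide)
      | exact iff_of_false hea (by rw [pathGraph_adj]; decide)
      | exact iff_of_false hbd (by rw [pathGraph_adj]; decide)
      | exact iff_of_false hdb (by rw [pathGraph_adj]; decide)
      | exact iff_of_false hbe (by rw [pathGraph_adj]; decide)
      | exact iff_of_false heb (by rw [pathGraph_adj]; decide)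
      | exact iff_of_false hce (by rw [pathGraph_adj]; decide)
      | exact iff_of_false hec (by rw [pathGraph_adj]; decide))

theorem statement10' {V : Type*} [Fintype V] (G : SimpleGraph V)
    (hconn : G.Connected)
    (hfree2 : IsEmpty (SimpleGraph.pathGraph 5 ↪g G))
    (p : ℕ) (A N : Fin p → Set V) (B : Set V)
    (hp : 5 ≤ p)
    (hpart : (⋃ i, A i) ∪ (⋃ i, N i) ∪ B = Set.univ)
    (hNB : ∀ i, Disjoint (N i) B)
    (hAne : ∀ i, (A i).Nonempty)
    (hAadj : ∀ i j, ∀ u ∈ A i, ∀ v ∈ A j, (G.Adj u v ↔ i ≠ j))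
    (hNnb : ∀ i, ∀ v ∈ N i, ∃ u ∈ A i, G.Adj v u)
    (hNanti : ∀ i j, i ≠ j → ∀ v ∈ N i, ∀ u ∈ A j, ¬ G.Adj v u)
    (hBanti : ∀ v ∈ B, ∀ i, ∀ u ∈ A i, ¬ G.Adj v u)
    (h3 : ∃ i j k : Fin p, i ≠ j ∧ i ≠ k ∧ j ≠ k ∧
      (N i).Nonempty ∧ (N j).Nonempty ∧ (N k).Nonempty)
    (hcompl : ∀ i j, i ≠ j → ∀ u ∈ N i, ∀ v ∈ N j, G.Adj u v) :
    (∀ b ∈ B, ∀ i, ∀ v ∈ N i, G.Adj b v) ∧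
      (∀ i, ∀ v ∈ N i, ∀ a ∈ A i, G.Adj v a) := by
  -- a third index
  have third : ∀ i j : Fin p, ∃ m : Fin p, m ≠ i ∧ m ≠ j := by
    intro i j
    have hc2 : ({i, j} : Finset (Fin p)).card ≤ 2 := by
      refine (Finset.card_insert_le _ _).trans ?_
      simp
    have hne : (({i, j} : Finset (Fin p))ᶜ).Nonempty := by
      rw [← Finset.card_pos, Finset.card_compl, Fintype.card_fin]
      omega
    obtain ⟨m, hm⟩ := hne
    simp only [Finset.mem_compl, Finset.mem_insert, Finset.mem_singleton, not_or] at hm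
    exact ⟨m, hm.1, hm.2⟩
  -- there is a nonempty N-part with index different from any given index
  have hNexists : ∀ i : Fin p, ∃ j, j ≠ i ∧ (N j).Nonempty := by
    obtain ⟨i0, j0, k0, hij, _, _, hN0, hN1, _⟩ := h3
    intro i
    by_cases h : i0 = i
    · exact ⟨j0, by rw [← h]; exact hij.symm, hN1⟩
    · exact ⟨i0, h, hN0⟩
  -- Part 2: every N i is complete to A i
  have partA : ∀ i, ∀ v ∈ N i, ∀ a ∈ A i, G.Adj v a := by
    intro i v hv a ha
    by_contra hva
    obtain ⟨a', ha', hva'⟩ := hNnb i v hv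
    obtain ⟨j, hji, w, hw⟩ := hNexists i
    obtain ⟨m, hmi, hmj⟩ := third i j
    obtain ⟨a'', ha''⟩ := hAne m
    have e1 : G.Adj a a'' := (hAadj i m a ha a'' ha'').mpr (fun h => hmi h.symm)
    have e2 : G.Adj a'' a' := (hAadj m i a'' ha'' a' ha').mpr hmi
    have e3 : G.Adj a' v := hva'.symm
    have e4 : G.Adj v w := hcompl i j (fun h => hji h.symm) v hv w hw
    have n1 : ¬G.Adj a a' := fun h => (hAadj i i a ha a' ha').mp h rfl
    have n2 : ¬G.Adj a v := fun h => hva h.symm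
    have n3 : ¬G.Adj a w := fun h => hNanti j i hji w hw a ha h.symm
    have n4 : ¬G.Adj a'' v := fun h => hNanti i m (fun h' => hmi h'.symm) v hv a'' ha'' h.symm
    have n5 : ¬G.Adj a'' w := fun h => hNanti j m (fun h' => hmj h'.symm) w hw a'' ha'' h.symm
    have n6 : ¬G.Adj a' w := fun h => hNanti j i hji w hw a' ha' h.symm
    exact noP5_s10 G hfree2 a a'' a' v w e1 e2 e3 e4 n1 n2 n3 n4 n5 n6
  -- a B-vertex adjacent to a vertex of N j is adjacent to all of N i for i ≠ j
  have caseNe : ∀ b ∈ B, ∀ j, ∀ w ∈ N j, G.Adj b w →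
      ∀ i, i ≠ j → ∀ v ∈ N i, G.Adj b v := by
    intro b hb j w hw hbw i hij v hv
    by_contra hbv
    obtain ⟨m, hmi, hmj⟩ := third i j
    obtain ⟨a, ha⟩ := hAne i
    obtain ⟨a'', ha''⟩ := hAne m
    have e2 : G.Adj w v := hcompl j i (fun h => hij h.symm) w hw v hv
    have e3 : G.Adj v a := partA i v hv a ha
    have e4 : G.Adj a a'' := (hAadj i m a ha a'' ha'').mpr (fun h => hmi h.symm)
    have n2 : ¬G.Adj b a := hBanti b hb i a ha
    have n3 : ¬G.Adj b a'' := hBanti b hb m a'' ha''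
    have n4 : ¬G.Adj w a := hNanti j i (fun h => hij h.symm) w hw a ha
    have n5 : ¬G.Adj w a'' := hNanti j m (fun h => hmj h.symm) w hw a'' ha''
    have n6 : ¬G.Adj v a'' := hNanti i m (fun h => hmi h.symm) v hv a'' ha''
    exact noP5_s10 G hfree2 b w v a a'' hbw e2 e3 e4 hbv n2 n3 n4 n5 n6
  -- a B-vertex adjacent to some vertex of some N j is adjacent to all of every N i
  have lemB : ∀ b ∈ B, ∀ j, ∀ w ∈ N j, G.Adj b w → ∀ i, ∀ v ∈ N i, G.Adj b v := by
    intro b hb j w hw hbw i v hv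
    by_cases hij : i = j
    · subst hij
      obtain ⟨k, hki, x, hx⟩ := hNexists i
      have hbx : G.Adj b x := caseNe b hb i w hw hbw k hki x hx
      exact caseNe b hb k x hx hbx i hki.symm v hv
    · exact caseNe b hb j w hw hbw i hij v hv
  refine ⟨?_, partA⟩
  intro b hb i v hv
  by_contra hbv
  have hbnev : b ≠ v := fun h => Set.disjoint_left.mp (hNB i) hv (h ▸ hb)
  have hd : G.dist b v ≠ 0 :=
    SimpleGraph.dist_ne_zero_iff_ne_and_reachable.mpr ⟨hbnev, hconn.preconnected b v⟩
  obtain ⟨P, hP⟩ := SimpleGraph.exists_walk_of_dist_ne_zero hd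
  -- prefix walks
  have prefixW : ∀ k, k ≤ P.length → ∃ q : G.Walk b (P.getVert k), q.length = k := by
    intro k
    induction k with
    | zero => exact fun _ => ⟨Walk.nil.copy rfl (P.getVert_zero).symm, by simp⟩
    | succ k ih =>
      intro hk
      obtain ⟨q, hq⟩ := ih (Nat.le_of_succ_le hk)
      exact ⟨q.concat (P.adj_getVert_succ (by omega)), by simp [Walk.length_concat, hq]⟩
  -- all inner vertices lie in B
  have inner : ∀ k, k < P.length → P.getVert k ∈ B := by
    intro k
    induction k with
    | zero => intro _; rw [P.getVert_zero]; exact hb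
    | succ k ih =>
      intro hk
      have hkB : P.getVert k ∈ B := ih (by omega)
      by_contra hnB
      have hmem : P.getVert (k + 1) ∈ (⋃ i, A i) ∪ (⋃ i, N i) ∪ B := by
        rw [hpart]; trivial
      have hadjk : G.Adj (P.getVert k) (P.getVert (k + 1)) := P.adj_getVert_succ (by omega)
      rcases hmem with (hA | hN) | hB'
      · obtain ⟨_, ⟨j, rfl⟩, hAj⟩ := hA
        exact hBanti _ hkB j _ hAj hadjk
      · obtain ⟨_, ⟨j, rfl⟩, hNj⟩ := hN
        -- then P.getVert k is adjacent to v, giving a too-short walk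
        have hadjv : G.Adj (P.getVert k) v := lemB _ hkB j _ hNj hadjk i v hv
        obtain ⟨q, hq⟩ := prefixW k (by omega)
        have : G.dist b v ≤ k + 1 := by
          have := SimpleGraph.dist_le (q.concat hadjv)
          rwa [Walk.length_concat, hq] at this
        omega
      · exact hnB hB'
  -- length at least 2
  have hL2 : 2 ≤ P.length := by
    rcases Nat.lt_or_ge P.length 2 with h | h
    · interval_cases hL : P.length
      · omega
      · have : G.Adj b v := by
          have := P.adj_getVert_succ (i := 0) (by omega)
          rwa [P.getVert_zero, show (0 + 1 : ℕ) = P.length from by omega, P.getVert_length]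
            at this
        exact absurd this hbv
    · exact h
  set L := P.length with hLdef
  have hb'' : P.getVert (L - 1) ∈ B := inner (L - 1) (by omega)
  have hb' : P.getVert (L - 2) ∈ B := inner (L - 2) (by omega)
  have e1 : G.Adj (P.getVert (L - 2)) (P.getVert (L - 1)) := by
    have := P.adj_getVert_succ (i := L - 2) (by omega)
    rwa [show L - 2 + 1 = L - 1 from by omega] at this
  have e2 : G.Adj (P.getVert (L - 1)) v := by
    have := P.adj_getVert_succ (i := L - 1) (by omega)
    rwa [show L - 1 + 1 = L from by omega, P.getVert_length] at this
  have n1 : ¬G.Adj (P.getVert (L - 2)) v := by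
    intro h
    obtain ⟨q, hq⟩ := prefixW (L - 2) (by omega)
    have := SimpleGraph.dist_le (q.concat h)
    rw [Walk.length_concat, hq] at this
    omega
  obtain ⟨m, hmi, -⟩ := third i i
  obtain ⟨a, ha⟩ := hAne i
  obtain ⟨a'', ha''⟩ := hAne m
  have e3 : G.Adj v a := partA i v hv a ha
  have e4 : G.Adj a a'' := (hAadj i m a ha a'' ha'').mpr (fun h => hmi h.symm)
  have n2 : ¬G.Adj (P.getVert (L - 2)) a := hBanti _ hb' i a ha
  have n3 : ¬G.Adj (P.getVert (L - 2)) a'' := hBanti _ hb' m a'' ha''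
  have n4 : ¬G.Adj (P.getVert (L - 1)) a := hBanti _ hb'' i a ha
  have n5 : ¬G.Adj (P.getVert (L - 1)) a'' := hBanti _ hb'' m a'' ha''
  have n6 : ¬G.Adj v a'' := hNanti i m (fun h => hmi h.symm) v hv a'' ha''
  exact noP5_s10 G hfree2 (P.getVert (L - 2)) (P.getVert (L - 1)) v a a''
    e1 e2 e3 e4 n1 n2 n3 n4 n5 n6

theorem statement10 {V : Type*} [Fintype V] (G : SimpleGraph V)
    (hconn : G.Connected)
    (hfree1 : _root_.Free co2P1P3 G) (hfree2 : _root_.Free (SimpleGraph.pathGraph 5) G)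
    (K : Set V) (hK : K.ncard = 5)
    (hKadj : ∀ u ∈ K, ∀ v ∈ K, u ≠ v → G.Adj u v)
    (p : ℕ) (A N : Fin p → Set V) (B : Set V)
    (hdec : K5Decomp G K p A N B)
    (h3 : ∃ i j k : Fin p, i ≠ j ∧ i ≠ k ∧ j ≠ k ∧
      (N i).Nonempty ∧ (N j).Nonempty ∧ (N k).Nonempty)
    (hcompl : ∀ i j, i ≠ j → ∀ u ∈ N i, ∀ v ∈ N j, G.Adj u v) :
    (∀ b ∈ B, ∀ i, ∀ v ∈ N i, G.Adj b v) ∧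
      (∀ i, ∀ v ∈ N i, ∀ a ∈ A i, G.Adj v a) := by
  obtain ⟨hp, hpart, hAA', hNN', hAN, hAB, hNB, hAne, hKsub, hAadj, hNnb, hNanti, hBanti⟩ := hdec
  exact statement10' G hconn hfree2 p A N B hp hpart hNB hAne hAadj hNnb hNanti hBanti h3 hcompl
end

section
/- Let G be a ($\overline{2P_1+P_3}$, P_2+P_3)-free graph, let K be a set of five pairwise adjacent vertices of G, let A_1,…,A_p,N_1,…,N_p,B be a K_5-decomposition of G with respect to K, and let D = V(G) \ (A_1 ∪ … ∪ A_p). Then G[D] is P_3-free; equivalently, every connected component of G[D] is a clique. -/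
open SimpleGraph

/-- Auxiliary: from an induced `P_3` `x - y - z` together with an edge `aj - ak`
anticomplete to it, we get an induced copy of `P_2 + P_3`. -/
lemma p2p3_embed {V : Type*} (G : SimpleGraph V) (aj ak x y z : V)
    (hajak : G.Adj aj ak) (hxy : G.Adj x y) (hyz : G.Adj y z)
    (hxz : ¬ G.Adj x z)
    (hxaj : ¬ G.Adj x aj) (hyaj : ¬ G.Adj y aj) (hzaj : ¬ G.Adj z aj)
    (hxak : ¬ G.Adj x ak) (hyak : ¬ G.Adj y ak) (hzak : ¬ G.Adj z ak)
    (d2 : x ≠ aj) (d3 : y ≠ aj) (d4 : z ≠ aj)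
    (d5 : x ≠ ak) (d6 : y ≠ ak) (d7 : z ≠ ak) (hxnez : x ≠ z) :
    Nonempty (P2PlusP3 ↪g G) := by
  refine ⟨⟨⟨![aj, ak, x, y, z], ?_⟩, ?_⟩⟩
  · intro a b hab
    fin_cases a <;> fin_cases b <;>
      simp only [Matrix.cons_val_zero, Matrix.cons_val_one, Matrix.head_cons,
        Matrix.cons_val_two, Matrix.tail_cons, Matrix.cons_val_three,
        Matrix.cons_val_four, Matrix.cons_val_fin_one] at hab <;>
      first
        | rfl
        | (exfalso; first
            | exact hajak.ne hab
            | exact hajak.ne hab.symm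
            | exact hxy.ne hab
            | exact hxy.ne hab.symm
            | exact hyz.ne hab
            | exact hyz.ne hab.symm
            | exact hxnez hab
            | exact hxnez hab.symm
            | exact d2 hab | exact d2 hab.symm
            | exact d3 hab | exact d3 hab.symm
            | exact d4 hab | exact d4 hab.symm
            | exact d5 hab | exact d5 hab.symm
            | exact d6 hab | exact d6 hab.symm
            | exact d7 hab | exact d7 hab.symm)
  · intro a b
    change G.Adj (![aj, ak, x, y, z] a) (![aj, ak, x, y, z] b) ↔ _
    fin_cases a <;> fin_cases b <;>
      simp only [Function.Embedding.coeFn_mk, Matrix.cons_val_zero, Matrix.cons_val_one,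
        Matrix.head_cons, Matrix.cons_val_two, Matrix.tail_cons, Matrix.cons_val_three,
        Matrix.cons_val_four, Matrix.cons_val_fin_one, P2PlusP3, SimpleGraph.fromRel_adj] <;>
      first
        | decide
        | simp_all [G.adj_comm]

theorem statement11 {V : Type*} [Fintype V] (G : SimpleGraph V)
    (hfree1 : _root_.Free co2P1P3 G) (hfree2 : _root_.Free P2PlusP3 G)
    (K : Set V) (hK : K.ncard = 5)
    (hKadj : ∀ u ∈ K, ∀ v ∈ K, u ≠ v → G.Adj u v)
    (p : ℕ) (A N : Fin p → Set V) (B : Set V)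
    (hdec : K5Decomp G K p A N B)
    (D : Set V) (hD : D = Set.univ \ ⋃ i, A i) :
    _root_.Free (SimpleGraph.pathGraph 3) (G.induce D) := by
  obtain ⟨hp, hcover, hAA, hNN, hAN, hAB, hNB, hAne, hKA, hadjA, hNnbr, hNanti, hBanti⟩ := hdec
  constructor
  rintro e
  set x : V := ((e 0 : D) : V) with hxdef
  set y : V := ((e 1 : D) : V) with hydef
  set z : V := ((e 2 : D) : V) with hzdef
  have hxD : x ∈ D := (e 0).2
  have hyD : y ∈ D := (e 1).2
  have hzD : z ∈ D := (e 2).2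
  have hadj01 : (SimpleGraph.pathGraph 3).Adj 0 1 := by
    rw [SimpleGraph.pathGraph_adj]; decide
  have hadj12 : (SimpleGraph.pathGraph 3).Adj 1 2 := by
    rw [SimpleGraph.pathGraph_adj]; decide
  have hnadj02 : ¬ (SimpleGraph.pathGraph 3).Adj 0 2 := by
    rw [SimpleGraph.pathGraph_adj]; decide
  have hxy : G.Adj x y := by
    have := e.map_rel_iff.mpr hadj01
    simpa [SimpleGraph.comap_adj] using this
  have hyz : G.Adj y z := by
    have := e.map_rel_iff.mpr hadj12
    simpa [SimpleGraph.comap_adj] using this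
  have hxz : ¬ G.Adj x z := by
    intro h
    apply hnadj02
    apply e.map_rel_iff.mp
    simpa [SimpleGraph.comap_adj] using h
  have hxnez : x ≠ z := by
    intro h
    have : (e 0 : D) = e 2 := Subtype.ext h
    have := e.injective this
    exact absurd this (by decide)
  -- every vertex of D avoids all but at most one part
  have key : ∀ v ∈ D, ∃ i : Fin p, ∀ j, j ≠ i → ∀ a ∈ A j, ¬ G.Adj v a := by
    intro v hv
    have hvA : v ∉ ⋃ i, A i := by rw [hD] at hv; exact hv.2
    have hv' : v ∈ (⋃ i, N i) ∪ B := by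
      have : v ∈ ((⋃ i, A i) ∪ (⋃ i, N i) ∪ B) := by rw [hcover]; trivial
      rcases this with h | h
      · rcases h with h | h
        · exact absurd h hvA
        · exact Or.inl h
      · exact Or.inr h
    rcases hv' with h | h
    · obtain ⟨_, ⟨i, rfl⟩, hi⟩ := h
      exact ⟨i, fun j hj a ha => hNanti i j (fun hh => hj hh.symm) v hi a ha⟩
    · exact ⟨⟨0, by omega⟩, fun j _ a ha => hBanti v h j a ha⟩
  obtain ⟨ix, hix⟩ := key x hxD
  obtain ⟨iy, hiy⟩ := key y hyD
  obtain ⟨iz, hiz⟩ := key z hzD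
  -- find two fresh indices
  have hcard : ({ix, iy, iz} : Finset (Fin p)).card ≤ 3 := by
    apply le_trans (Finset.card_insert_le _ _)
    have := Finset.card_insert_le iy ({iz} : Finset (Fin p))
    simp at this ⊢
    omega
  have hcompl : 1 < ({ix, iy, iz} : Finset (Fin p))ᶜ.card := by
    have := Finset.card_compl ({ix, iy, iz} : Finset (Fin p))
    rw [Fintype.card_fin] at this
    omega
  obtain ⟨j, hj, k, hk, hjk⟩ := Finset.one_lt_card.mp hcompl
  simp only [Finset.mem_compl, Finset.mem_insert, Finset.mem_singleton, not_or] at hj hk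
  obtain ⟨aj, haj⟩ := hAne j
  obtain ⟨ak, hak⟩ := hAne k
  have hajak : G.Adj aj ak := (hadjA j k aj haj ak hak).mpr hjk
  have hDA : ∀ v ∈ D, ∀ i, ∀ a ∈ A i, v ≠ a := by
    intro v hv i a ha h
    rw [hD] at hv
    exact hv.2 (Set.mem_iUnion.mpr ⟨i, h ▸ ha⟩)
  obtain ⟨emb⟩ := p2p3_embed G aj ak x y z hajak hxy hyz hxz
    (hix j hj.1 aj haj) (hiy j hj.2.1 aj haj) (hiz j hj.2.2 aj haj)
    (hix k hk.1 ak hak) (hiy k hk.2.1 ak hak) (hiz k hk.2.2 ak hak)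
    (hDA x hxD j aj haj) (hDA y hyD j aj haj) (hDA z hzD j aj haj)
    (hDA x hxD k ak hak) (hDA y hyD k ak hak) (hDA z hzD k ak hak) hxnez
  exact hfree2.elim emb
end

section
/- Let G be a ($\overline{2P_1+P_3}$, P_2+P_3)-free graph, let K be a set of five pairwise adjacent vertices of G, let A_1,…,A_p,N_1,…,N_p,B be a K_5-decomposition of G with respect to K, and let D = V(G) \ (A_1 ∪ … ∪ A_p). If v ∈ N_j for some j ∈ {1,…,p} and u, u' are two adjacent vertices of D \ N_j, then v is adjacent to both u and u'. -/
open SimpleGraph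

lemma p2p3_aux {V : Type*} (G : SimpleGraph V) (hfree : _root_.Free P2PlusP3 G)
    (x0 x1 x2 x3 x4 : V)
    (h01 : G.Adj x0 x1) (h23 : G.Adj x2 x3) (h34 : G.Adj x3 x4)
    (n02 : ¬ G.Adj x0 x2) (n03 : ¬ G.Adj x0 x3) (n04 : ¬ G.Adj x0 x4)
    (n12 : ¬ G.Adj x1 x2) (n13 : ¬ G.Adj x1 x3) (n14 : ¬ G.Adj x1 x4)
    (n24 : ¬ G.Adj x2 x4)
    (d02 : x0 ≠ x2) (d03 : x0 ≠ x3) (d04 : x0 ≠ x4)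
    (d12 : x1 ≠ x2) (d13 : x1 ≠ x3) (d14 : x1 ≠ x4)
    (d24 : x2 ≠ x4) : False := by
  have d01 : x0 ≠ x1 := h01.ne
  have d23 : x2 ≠ x3 := h23.ne
  have d34 : x3 ≠ x4 := h34.ne
  apply hfree.false
  refine ⟨⟨![x0,x1,x2,x3,x4], ?_⟩, ?_⟩
  · intro a b hab
    fin_cases a <;> fin_cases b <;> simp_all
  · intro a b
    fin_cases a <;> fin_cases b <;>
      simp [P2PlusP3, SimpleGraph.fromRel_adj] <;>
      first
        | exact h01 | exact h01.symm | exact h23 | exact h23.symm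
        | exact h34 | exact h34.symm | exact G.irrefl
        | (intro h; first
            | exact n02 h | exact n03 h | exact n04 h | exact n12 h | exact n13 h
            | exact n14 h | exact n24 h
            | exact n02 h.symm | exact n03 h.symm | exact n04 h.symm | exact n12 h.symm
            | exact n13 h.symm | exact n14 h.symm | exact n24 h.symm)

theorem statement12 {V : Type*} [Fintype V] (G : SimpleGraph V)
    (hfree1 : _root_.Free co2P1P3 G) (hfree2 : _root_.Free P2PlusP3 G)
    (K : Set V) (hK : K.ncard = 5)
    (hKadj : ∀ u ∈ K, ∀ v ∈ K, u ≠ v → G.Adj u v)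
    (p : ℕ) (A N : Fin p → Set V) (B : Set V)
    (hdec : K5Decomp G K p A N B)
    (D : Set V) (hD : D = Set.univ \ ⋃ i, A i)
    (j : Fin p) (v : V) (hv : v ∈ N j)
    (u u' : V) (hu : u ∈ D) (hu' : u' ∈ D)
    (huj : u ∉ N j) (hu'j : u' ∉ N j)
    (huu' : G.Adj u u') :
    G.Adj v u ∧ G.Adj v u' := by
  obtain ⟨hp, hcover, hAA, hNN, hAN, hAB, hNB, hAne, hKA, hadjA, hNnb, hNanti, hBanti⟩ := hdec
  -- each of u, u' is anticomplete to all parts A k outside a set S of at most one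
  -- index, with j ∉ S
  have hU : ∀ w : V, w ∈ D → w ∉ N j →
      ∃ S : Finset (Fin p), S.card ≤ 1 ∧ j ∉ S ∧
        ∀ k ∉ S, ∀ x ∈ A k, ¬ G.Adj w x := by
    intro w hwD hwN
    have hwA : w ∉ ⋃ i, A i := by rw [hD] at hwD; exact hwD.2
    have hw : w ∈ (⋃ i, A i) ∪ (⋃ i, N i) ∪ B := hcover ▸ Set.mem_univ w
    rcases hw with (hw | hw) | hw
    · exact absurd hw hwA
    · obtain ⟨i, hi⟩ := Set.mem_iUnion.mp hw
      have hij : i ≠ j := fun h => hwN (h ▸ hi)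
      refine ⟨{i}, by simp, by simp [hij.symm], ?_⟩
      intro k hk x hx
      exact hNanti i k (fun h => hk (by simp [h])) w hi x hx
    · exact ⟨∅, by simp, by simp, fun k _ x hx => hBanti w hw k x hx⟩
  obtain ⟨Su, hSuc, hSuj, hSu⟩ := hU u hu huj
  obtain ⟨Su', hSu'c, hSu'j, hSu'⟩ := hU u' hu' hu'j
  -- pick two distinct indices k ≠ l avoiding Su, Su' and j
  set S : Finset (Fin p) := Su ∪ Su' ∪ {j} with hS
  have hScard : S.card ≤ 3 := by
    calc S.card ≤ (Su ∪ Su').card + ({j} : Finset (Fin p)).card := Finset.card_union_le _ _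
    _ ≤ Su.card + Su'.card + 1 := by
        have := Finset.card_union_le Su Su'
        simp only [Finset.card_singleton]; omega
    _ ≤ 3 := by omega
  have hcompl : 1 < Sᶜ.card := by
    have := Finset.card_compl S
    have : Sᶜ.card = Fintype.card (Fin p) - S.card := Finset.card_compl S
    rw [Fintype.card_fin] at this
    omega
  obtain ⟨k, hk, l, hl, hkl⟩ := Finset.one_lt_card.mp hcompl
  rw [Finset.mem_compl, hS] at hk hl
  simp only [Finset.mem_union, Finset.mem_singleton, not_or] at hk hl
  obtain ⟨⟨hkSu, hkSu'⟩, hkj⟩ := hk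
  obtain ⟨⟨hlSu, hlSu'⟩, hlj⟩ := hl
  -- choose vertices
  obtain ⟨a, ha, hva⟩ := hNnb j v hv
  obtain ⟨x, hx⟩ := hAne k
  obtain ⟨y, hy⟩ := hAne l
  -- basic memberships / non-memberships
  have huA : u ∉ ⋃ i, A i := by rw [hD] at hu; exact hu.2
  have hu'A : u' ∉ ⋃ i, A i := by rw [hD] at hu'; exact hu'.2
  have hvA : ∀ i, v ∉ A i := fun i h => (hAN i j).ne_of_mem h hv rfl
  -- distinctness
  have dvu : v ≠ u := fun h => huj (h ▸ hv)
  have dvu' : v ≠ u' := fun h => hu'j (h ▸ hv)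
  have dau : a ≠ u := fun h => huA (h ▸ Set.mem_iUnion.mpr ⟨j, ha⟩)
  have dau' : a ≠ u' := fun h => hu'A (h ▸ Set.mem_iUnion.mpr ⟨j, ha⟩)
  have dav : a ≠ v := fun h => hvA j (h ▸ ha)
  have dxu : x ≠ u := fun h => huA (h ▸ Set.mem_iUnion.mpr ⟨k, hx⟩)
  have dxu' : x ≠ u' := fun h => hu'A (h ▸ Set.mem_iUnion.mpr ⟨k, hx⟩)
  have dxv : x ≠ v := fun h => hvA k (h ▸ hx)
  have dxa : x ≠ a := fun h => (hAA k j hkj).ne_of_mem hx ha h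
  have dyu : y ≠ u := fun h => huA (h ▸ Set.mem_iUnion.mpr ⟨l, hy⟩)
  have dyu' : y ≠ u' := fun h => hu'A (h ▸ Set.mem_iUnion.mpr ⟨l, hy⟩)
  have dyv : y ≠ v := fun h => hvA l (h ▸ hy)
  -- adjacency facts
  have haxy : G.Adj x y := (hadjA k l x hx y hy).mpr hkl
  have haax : G.Adj a x := (hadjA j k a ha x hx).mpr (Ne.symm hkj)
  have nvx : ¬ G.Adj v x := hNanti j k (Ne.symm hkj) v hv x hx
  have nvy : ¬ G.Adj v y := hNanti j l (Ne.symm hlj) v hv y hy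
  have nua : ¬ G.Adj u a := hSu j hSuj a ha
  have nux : ¬ G.Adj u x := hSu k hkSu x hx
  have nuy : ¬ G.Adj u y := hSu l hlSu y hy
  have nu'a : ¬ G.Adj u' a := hSu' j hSu'j a ha
  have nu'x : ¬ G.Adj u' x := hSu' k hkSu' x hx
  have nu'y : ¬ G.Adj u' y := hSu' l hlSu' y hy
  by_cases h1 : G.Adj v u <;> by_cases h2 : G.Adj v u'
  · exact ⟨h1, h2⟩
  · -- v adj u, not u': P3 = u' - u - v, P2 = x - y
    exfalso
    exact p2p3_aux G hfree2 x y u' u v haxy huu'.symm h1.symm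
      (fun h => nu'x h.symm) (fun h => nux h.symm) (fun h => nvx h.symm)
      (fun h => nu'y h.symm) (fun h => nuy h.symm) (fun h => nvy h.symm)
      (fun h => h2 h.symm)
      dxu' dxu dxv dyu' dyu dyv dvu'.symm
  · -- v adj u', not u: P3 = u - u' - v, P2 = x - y
    exfalso
    exact p2p3_aux G hfree2 x y u u' v haxy huu' h2.symm
      (fun h => nux h.symm) (fun h => nu'x h.symm) (fun h => nvx h.symm)
      (fun h => nuy h.symm) (fun h => nu'y h.symm) (fun h => nvy h.symm)
      (fun h => h1 h.symm)
      dxu dxu' dxv dyu dyu' dyv dvu.symm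
  · -- v adj neither: P2 = u - u', P3 = v - a - x
    exfalso
    exact p2p3_aux G hfree2 u u' v a x huu' hva haax
      (fun h => h1 h.symm) nua nux
      (fun h => h2 h.symm) nu'a nu'x
      nvx
      dvu.symm dau.symm dxu.symm dvu'.symm dau'.symm dxu'.symm dxv.symm
end

section
/- Let G be a connected ($\overline{2P_1+P_3}$, P_2+P_3)-free graph, let K be a set of five pairwise adjacent vertices of G, let A_1,…,A_p,N_1,…,N_p,B be a K_5-decomposition of G with respect to K, and let D = V(G) \ (A_1 ∪ … ∪ A_p). If G[D] has at least two connected components and one of these components C has at least three vertices, then there is an index i ∈ {1,…,p} such that D \ C ⊆ N_i ∪ B and all but at most one vertex of C belongs to N_i. -/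
open SimpleGraph

lemma no_P2P3 {V : Type*} (G : SimpleGraph V) (hfree : _root_.Free P2PlusP3 G)
    (v0 v1 v2 v3 v4 : V)
    (h01 : G.Adj v0 v1) (h23 : G.Adj v2 v3) (h34 : G.Adj v3 v4)
    (h02 : ¬ G.Adj v0 v2) (h03 : ¬ G.Adj v0 v3) (h04 : ¬ G.Adj v0 v4)
    (h12 : ¬ G.Adj v1 v2) (h13 : ¬ G.Adj v1 v3) (h14 : ¬ G.Adj v1 v4)
    (h24 : ¬ G.Adj v2 v4)
    (n02 : v0 ≠ v2) (n03 : v0 ≠ v3) (n04 : v0 ≠ v4)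
    (n12 : v1 ≠ v2) (n13 : v1 ≠ v3) (n14 : v1 ≠ v4) (n24 : v2 ≠ v4) : False := by
  have n01 : v0 ≠ v1 := h01.ne
  have n23 : v2 ≠ v3 := h23.ne
  have n34 : v3 ≠ v4 := h34.ne
  apply hfree.false
  refine ⟨⟨![v0,v1,v2,v3,v4], ?_⟩, ?_⟩
  · intro i j h
    fin_cases i <;> fin_cases j <;> simp_all
  · intro a b
    change G.Adj (![v0,v1,v2,v3,v4] a) (![v0,v1,v2,v3,v4] b) ↔ _
    have h10 := h01.symm; have h32 := h23.symm; have h43 := h34.symm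
    have h20 : ¬ G.Adj v2 v0 := fun h => h02 h.symm
    have h30 : ¬ G.Adj v3 v0 := fun h => h03 h.symm
    have h40 : ¬ G.Adj v4 v0 := fun h => h04 h.symm
    have h21 : ¬ G.Adj v2 v1 := fun h => h12 h.symm
    have h31 : ¬ G.Adj v3 v1 := fun h => h13 h.symm
    have h41 : ¬ G.Adj v4 v1 := fun h => h14 h.symm
    have h42 : ¬ G.Adj v4 v2 := fun h => h24 h.symm
    fin_cases a <;> fin_cases b <;> simp_all [P2PlusP3]

lemma pick_two {p : ℕ} (hp : 5 ≤ p) (t1 t2 t3 : Fin p) :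
    ∃ l m : Fin p, l ≠ m ∧ l ≠ t1 ∧ l ≠ t2 ∧ l ≠ t3 ∧ m ≠ t1 ∧ m ≠ t2 ∧ m ≠ t3 := by
  have hcard : ({t1, t2, t3} : Finset (Fin p)).card ≤ 3 := by
    apply le_trans (Finset.card_insert_le _ _)
    have := Finset.card_insert_le t2 ({t3} : Finset (Fin p))
    simp at this ⊢
    omega
  have hbig : 1 < (Finset.univ \ ({t1, t2, t3} : Finset (Fin p))).card := by
    have := Finset.card_sdiff_of_subset (Finset.subset_univ ({t1, t2, t3} : Finset (Fin p)))
    rw [this]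
    have : (Finset.univ : Finset (Fin p)).card = p := Finset.card_fin p
    omega
  obtain ⟨l, hl, m, hm, hlm⟩ := Finset.one_lt_card.mp hbig
  simp only [Finset.mem_sdiff, Finset.mem_univ, Finset.mem_insert, Finset.mem_singleton,
    true_and, not_or] at hl hm
  exact ⟨l, m, hlm, hl.1, hl.2.1, hl.2.2, hm.1, hm.2.1, hm.2.2⟩

theorem statement13 {V : Type*} [Fintype V] (G : SimpleGraph V)
    (hconn : G.Connected)
    (hfree1 : _root_.Free co2P1P3 G) (hfree2 : _root_.Free P2PlusP3 G)
    (K : Set V) (hK : K.ncard = 5)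
    (hKadj : ∀ u ∈ K, ∀ v ∈ K, u ≠ v → G.Adj u v)
    (p : ℕ) (A N : Fin p → Set V) (B : Set V)
    (hdec : K5Decomp G K p A N B)
    (D : Set V) (hD : D = Set.univ \ ⋃ i, A i)
    (C : Set V) (hCD : C ⊆ D)
    (hCconn : (G.induce C).Connected)
    (hCmax : ∀ u ∈ C, ∀ v ∈ D, v ∉ C → ¬ G.Adj u v)
    (hother : (D \ C).Nonempty)
    (hC3 : 3 ≤ C.ncard) :
    ∃ i, D \ C ⊆ N i ∪ B ∧ (C \ N i).ncard ≤ 1 := by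
  obtain ⟨hp, huniv, hAAd, hNNd, hANd, hABd, hNBd, hAne, hKA, hadjA, hNex, hNanti, hBanti⟩ := hdec
  have hp0 : 0 < p := by omega
  have hDA : ∀ v ∈ D, ∀ i, v ∉ A i := by
    intro v hv i hvA
    rw [hD] at hv
    exact hv.2 (Set.mem_iUnion.mpr ⟨i, hvA⟩)
  have hAnotD : ∀ i : Fin p, ∀ a ∈ A i, a ∉ D := fun i a ha hD' => hDA a hD' i ha
  have hDclass : ∀ v ∈ D, (∃ i, v ∈ N i) ∨ v ∈ B := by
    intro v hv
    have hmem : v ∈ ((⋃ i, A i) ∪ (⋃ i, N i) ∪ B) := by rw [huniv]; trivial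
    rcases hmem with (h | h) | h
    · exact absurd (Set.mem_iUnion.mp h).choose_spec (hDA v hv _)
    · exact Or.inl (Set.mem_iUnion.mp h)
    · exact Or.inr h
  have hkey : ∀ v ∈ D, ∃ t : Fin p, ∀ l : Fin p, l ≠ t → ∀ a ∈ A l, ¬ G.Adj v a := by
    intro v hv
    rcases hDclass v hv with ⟨i, hi⟩ | hB
    · exact ⟨i, fun l hl a ha => hNanti i l (fun h => hl h.symm) v hi a ha⟩
    · exact ⟨⟨0, hp0⟩, fun l _ a ha => hBanti v hB l a ha⟩
  -- no induced P3 inside D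
  have hT4 : ∀ x ∈ D, ∀ y ∈ D, ∀ z ∈ D, G.Adj x y → G.Adj y z → x ≠ z → G.Adj x z := by
    intro x hx y hy z hz hxy hyz hne
    by_contra hxz
    obtain ⟨tx, htx⟩ := hkey x hx
    obtain ⟨ty, hty⟩ := hkey y hy
    obtain ⟨tz, htz⟩ := hkey z hz
    obtain ⟨l, m, hlm, hl1, hl2, hl3, hm1, hm2, hm3⟩ := pick_two hp tx ty tz
    obtain ⟨a, ha⟩ := hAne l
    obtain ⟨a', ha'⟩ := hAne m
    have haD : a ∉ D := hAnotD l a ha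
    have ha'D : a' ∉ D := hAnotD m a' ha'
    exact no_P2P3 G hfree2 a a' x y z
      ((hadjA l m a ha a' ha').mpr hlm)
      hxy hyz
      (fun h => htx l hl1 a ha h.symm)
      (fun h => hty l hl2 a ha h.symm)
      (fun h => htz l hl3 a ha h.symm)
      (fun h => htx m hm1 a' ha' h.symm)
      (fun h => hty m hm2 a' ha' h.symm)
      (fun h => htz m hm3 a' ha' h.symm)
      hxz
      (fun h => haD (h ▸ hx)) (fun h => haD (h ▸ hy)) (fun h => haD (h ▸ hz))
      (fun h => ha'D (h ▸ hx)) (fun h => ha'D (h ▸ hy)) (fun h => ha'D (h ▸ hz))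
      hne
  -- C is a clique
  have hclique : ∀ x ∈ C, ∀ y ∈ C, x ≠ y → G.Adj x y := by
    have aux : ∀ (u v : C) (w : (G.induce C).Walk u v), (u : V) = v ∨ G.Adj u v := by
      intro u v w
      induction w with
      | nil => exact Or.inl rfl
      | @cons u' v' w' h q ih =>
        have hadj : G.Adj (u' : V) v' := h
        rcases ih with heq | hadj2
        · exact Or.inr (heq ▸ hadj)
        · by_cases heq : (u' : V) = w'
          · exact Or.inl heq
          · exact Or.inr (hT4 u' (hCD u'.2) v' (hCD v'.2) w' (hCD w'.2) hadj hadj2 heq)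
    intro x hx y hy hne
    obtain ⟨w⟩ := hCconn.preconnected ⟨x, hx⟩ ⟨y, hy⟩
    rcases aux ⟨x, hx⟩ ⟨y, hy⟩ w with h | h
    · exact absurd h hne
    · exact h
  -- find an N-vertex in D \ C with a neighbour in the corresponding A part
  have hexit : ∃ w0 ∈ D \ C, ∃ j b, w0 ∈ N j ∧ b ∈ A j ∧ G.Adj w0 b := by
    obtain ⟨u, hu⟩ := hother
    obtain ⟨a0, ha0⟩ := hAne ⟨0, hp0⟩
    have ha0D : a0 ∉ D := hAnotD _ a0 ha0
    obtain ⟨w⟩ := hconn.preconnected u a0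
    have exitlem : ∀ (s t : V) (w : G.Walk s t), s ∈ D \ C → t ∉ D \ C →
        ∃ x ∈ D \ C, ∃ y, G.Adj x y ∧ y ∉ D \ C := by
      intro s t w
      induction w with
      | nil => intro hs ht; exact absurd hs ht
      | @cons s' m' t' h q ih =>
        intro hs ht
        by_cases hm : m' ∈ D \ C
        · exact ih hm ht
        · exact ⟨s', hs, m', h, hm⟩
    obtain ⟨x, hxDC, y, hxy, hyDC⟩ := exitlem u a0 w hu (fun h => ha0D h.1)
    have hyC : y ∉ C := fun hyC => hCmax y hyC x hxDC.1 hxDC.2 hxy.symm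
    have hyD : y ∉ D := fun hyD => hyDC ⟨hyD, hyC⟩
    have hyA : ∃ i, y ∈ A i := by
      by_contra hcon
      push_neg at hcon
      refine hyD ?_
      rw [hD]
      refine ⟨trivial, fun h => ?_⟩
      obtain ⟨i, hi⟩ := Set.mem_iUnion.mp h
      exact hcon i hi
    rcases hDclass x hxDC.1 with ⟨m, hm⟩ | hB
    · obtain ⟨b, hb, hab⟩ := hNex m x hm
      exact ⟨x, hxDC, m, b, hm, hb, hab⟩
    · obtain ⟨i, hyAi⟩ := hyA
      exact absurd hxy (hBanti x hB i y hyAi)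
  -- T3: every edge of C has an endpoint adjacent to b'
  have hT3 : ∀ w' ∈ D \ C, ∀ j' : Fin p, ∀ b', w' ∈ N j' → b' ∈ A j' → G.Adj w' b' →
      ∀ x ∈ C, ∀ y ∈ C, G.Adj x y → G.Adj b' x ∨ G.Adj b' y := by
    intro w' hw' j' b' hwN hbA hwb x hx y hy hxy
    by_contra hcon
    push_neg at hcon
    obtain ⟨hbx, hby⟩ := hcon
    obtain ⟨tx, htx⟩ := hkey x (hCD hx)
    obtain ⟨ty, hty⟩ := hkey y (hCD hy)
    obtain ⟨l, m, hlm, hl1, hl2, hl3, _, _, _⟩ := pick_two hp j' tx ty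
    obtain ⟨a', ha'⟩ := hAne l
    have ha'D : a' ∉ D := hAnotD l a' ha'
    have hbD : b' ∉ D := hAnotD j' b' hbA
    exact no_P2P3 G hfree2 x y w' b' a'
      hxy hwb
      ((hadjA j' l b' hbA a' ha').mpr (fun h => hl1 h.symm))
      (fun h => hCmax x hx w' hw'.1 hw'.2 h)
      (fun h => hbx h.symm)
      (htx l hl2 a' ha')
      (fun h => hCmax y hy w' hw'.1 hw'.2 h)
      (fun h => hby h.symm)
      (hty l hl3 a' ha')
      (hNanti j' l (fun h => hl1 h.symm) w' hwN a' ha')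
      (fun h => hw'.2 (h ▸ hx))
      (fun h => hbD (h ▸ hCD hx))
      (fun h => ha'D (h ▸ hCD hx))
      (fun h => hw'.2 (h ▸ hy))
      (fun h => hbD (h ▸ hCD hy))
      (fun h => ha'D (h ▸ hCD hy))
      (fun h => ha'D (h ▸ hw'.1))
  obtain ⟨w0, hw0, j, b, hw0N, hbA, hw0b⟩ := hexit
  have hadjbN : ∀ v ∈ C, G.Adj b v → v ∈ N j := by
    intro v hv hbv
    rcases hDclass v (hCD hv) with ⟨m', hm'⟩ | hB
    · by_cases h : m' = j
      · exact h ▸ hm'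
      · exact absurd hbv.symm (hNanti m' j h v hm' b hbA)
    · exact absurd hbv.symm (hBanti v hB j b hbA)
  have hle1 : (C \ N j).ncard ≤ 1 := by
    rw [Set.ncard_le_one (Set.toFinite _)]
    intro x1 hx1 x2 hx2
    by_contra hne
    have hadj := hclique x1 hx1.1 x2 hx2.1 hne
    rcases hT3 w0 hw0 j b hw0N hbA hw0b x1 hx1.1 x2 hx2.1 hadj with h | h
    · exact hx1.2 (hadjbN x1 hx1.1 h)
    · exact hx2.2 (hadjbN x2 hx2.1 h)
  refine ⟨j, ?_, hle1⟩
  have hint : 1 < (C ∩ N j).ncard := by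
    have h1 : C ⊆ (C \ N j) ∪ (C ∩ N j) := by
      intro v hv
      by_cases h : v ∈ N j
      · exact Or.inr ⟨hv, h⟩
      · exact Or.inl ⟨hv, h⟩
    have h2 : C.ncard ≤ (C \ N j).ncard + (C ∩ N j).ncard :=
      le_trans (Set.ncard_le_ncard h1 (Set.toFinite _)) (Set.ncard_union_le _ _)
    omega
  obtain ⟨x1, hx1, x2, hx2, hne12⟩ := (Set.one_lt_ncard (Set.toFinite _)).mp hint
  intro u hu
  rcases hDclass u hu.1 with ⟨j', hj'⟩ | hB
  · by_cases h : j' = j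
    · exact Or.inl (h ▸ hj')
    · exfalso
      obtain ⟨b', hb', hub'⟩ := hNex j' u hj'
      rcases hT3 u hu j' b' hj' hb' hub' x1 hx1.1 x2 hx2.1 (hclique x1 hx1.1 x2 hx2.1 hne12) with hh | hh
      · exact hNanti j j' (fun e => h e.symm) x1 hx1.2 b' hb' hh.symm
      · exact hNanti j j' (fun e => h e.symm) x2 hx2.2 b' hb' hh.symm
  · exact Or.inr hB
end

section
/- Let G be a ($\overline{2P_1+P_3}$, P_2+P_3)-free graph, let K be a set of five pairwise adjacent vertices of G, let A_1,…,A_p,N_1,…,N_p,B be a K_5-decomposition of G with respect to K, let D = V(G) \ (A_1 ∪ … ∪ A_p), and let i ∈ {1,…,p}. Suppose G[D] contains at least two connected components each having at least two vertices. If a vertex v ∈ A_i has two non-neighbours lying in the same connected component of G[D], then v is anti-complete to D; furthermore, at most one vertex of A_i is anti-complete to D. -/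
open SimpleGraph

instance : DecidableRel P2PlusP3.Adj := fun a b => by
  unfold P2PlusP3; rw [SimpleGraph.fromRel_adj]; infer_instance

lemma noP2P3 {V : Type*} {G : SimpleGraph V} (hfree2 : _root_.Free P2PlusP3 G)
    (a b c d e : V)
    (hab : G.Adj a b) (hcd : G.Adj c d) (hde : G.Adj d e)
    (hac : ¬G.Adj a c) (had : ¬G.Adj a d) (hae : ¬G.Adj a e)
    (hbc : ¬G.Adj b c) (hbd : ¬G.Adj b d) (hbe : ¬G.Adj b e)
    (hce : ¬G.Adj c e)
    (nac : a ≠ c) (nad : a ≠ d) (nae : a ≠ e)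
    (nbc : b ≠ c) (nbd : b ≠ d) (nbe : b ≠ e) (nce : c ≠ e) : False := by
  have nab : a ≠ b := hab.ne
  have ncd : c ≠ d := hcd.ne
  have nde : d ≠ e := hde.ne
  refine hfree2.false ⟨⟨![a,b,c,d,e], ?_⟩, ?_⟩
  · intro u w h
    fin_cases u <;> fin_cases w <;> simp_all
  · intro u w
    fin_cases u <;> fin_cases w <;>
      simp only [Matrix.cons_val_zero, Matrix.cons_val_one, Matrix.head_cons,
        Matrix.cons_val_two, Matrix.tail_cons, Matrix.cons_val_three, Matrix.cons_val_four,
        Function.Embedding.coeFn_mk] <;>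
      first
        | (exact iff_of_true (by assumption) (by decide))
        | (exact iff_of_true (SimpleGraph.Adj.symm (by assumption)) (by decide))
        | (exact iff_of_false (by assumption) (by decide))
        | (exact iff_of_false (fun hh => (by assumption : ¬ G.Adj _ _) hh.symm) (by decide))
        | (exact iff_of_false (SimpleGraph.irrefl G) (by decide))

lemma exists_trip {S : Type*} (H : SimpleGraph S) :
    ∀ (n : ℕ) (x y : S), x ≠ y → ¬ H.Adj x y → ∀ w : H.Walk x y, w.length ≤ n →
      ∃ a b c : S, H.Adj a b ∧ H.Adj b c ∧ a ≠ c ∧ ¬ H.Adj a c ∧ H.Reachable x a := by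
  intro n
  induction n with
  | zero =>
    intro x y hxy _ w hw
    cases w with
    | nil => exact absurd rfl hxy
    | cons h q => simp [SimpleGraph.Walk.length_cons] at hw
  | succ n ih =>
    intro x y hxy hnadj w hw
    cases w with
    | nil => exact absurd rfl hxy
    | cons h1 w' =>
      rename_i b
      cases w' with
      | nil => exact absurd h1 hnadj
      | cons h2 w'' =>
        rename_i c
        by_cases hxc : x = c
        · subst hxc
          exact ih x y hxy hnadj w'' (by simp [SimpleGraph.Walk.length_cons] at hw ⊢; omega)
        · by_cases hadjxc : H.Adj x c
          · exact ih x y hxy hnadj (SimpleGraph.Walk.cons hadjxc w'')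
              (by simp [SimpleGraph.Walk.length_cons] at hw ⊢; omega)
          · exact ⟨x, b, c, h1, h2, hxc, hadjxc, SimpleGraph.Reachable.refl x⟩

theorem statement14 {V : Type*} [Fintype V] (G : SimpleGraph V)
    (hfree1 : _root_.Free co2P1P3 G) (hfree2 : _root_.Free P2PlusP3 G)
    (K : Set V) (hK : K.ncard = 5)
    (hKadj : ∀ u ∈ K, ∀ v ∈ K, u ≠ v → G.Adj u v)
    (p : ℕ) (A N : Fin p → Set V) (B : Set V)
    (hdec : K5Decomp G K p A N B)
    (D : Set V) (hD : D = Set.univ \ ⋃ i, A i)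
    (i : Fin p)
    (hcomp : ∃ x₁ y₁ x₂ y₂ : D, (G.induce D).Adj x₁ y₁ ∧ (G.induce D).Adj x₂ y₂ ∧
      ¬ (G.induce D).Reachable x₁ x₂) :
    (∀ v ∈ A i, ∀ x y : D, (x : V) ≠ (y : V) →
        ¬ G.Adj v (x : V) → ¬ G.Adj v (y : V) →
        (G.induce D).Reachable x y → ∀ d ∈ D, ¬ G.Adj v d) ∧
      (∀ v ∈ A i, ∀ w ∈ A i,
        (∀ d ∈ D, ¬ G.Adj v d) → (∀ d ∈ D, ¬ G.Adj w d) → v = w) := by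
  obtain ⟨hp5, hcover, hAdisj, hNdisj, hANdisj, hABdisj, hNBdisj, hAne, hKsub, hmulti,
    hNnbr, hNanti, hBanti⟩ := hdec
  obtain ⟨x₁, y₁, x₂, y₂, he1, he2, hnr⟩ := hcomp
  -- basic facts
  have hDA : ∀ d ∈ D, ∀ j, d ∉ A j := by
    intro d hd j hdj
    rw [hD] at hd
    exact hd.2 (Set.mem_iUnion.mpr ⟨j, hdj⟩)
  have hAD : ∀ j, ∀ u ∈ A j, u ∉ D := fun j u hu hud => hDA u hud j hu
  have hmemUnion : ∀ d ∈ D, d ∈ ((⋃ k, N k) ∪ B) := by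
    intro d hd
    have hd' : d ∈ ((⋃ k, A k) ∪ (⋃ k, N k) ∪ B) := by rw [hcover]; trivial
    rcases hd' with (h | h) | h
    · obtain ⟨k, hk⟩ := Set.mem_iUnion.mp h
      exact absurd hk (hDA d hd k)
    · exact Or.inl h
    · exact Or.inr h
  have avoid : ∀ d ∈ D, ∃ k : Fin p, ∀ j, j ≠ k → ∀ u ∈ A j, ¬ G.Adj d u := by
    intro d hd
    rcases hmemUnion d hd with h | h
    · obtain ⟨k, hk⟩ := Set.mem_iUnion.mp h
      exact ⟨k, fun j hj u hu => hNanti k j (Ne.symm hj) d hk u hu⟩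
    · exact ⟨i, fun j _ u hu => hBanti d h j u hu⟩
  have pick : ∀ k1 k2 : Fin p, ∃ j : Fin p, j ≠ i ∧ j ≠ k1 ∧ j ≠ k2 := by
    intro k1 k2
    by_contra hc
    push_neg at hc
    have hsub : (Finset.univ : Finset (Fin p)) ⊆ {i, k1, k2} := by
      intro j _
      simp only [Finset.mem_insert, Finset.mem_singleton]
      rcases eq_or_ne j i with h | h
      · exact Or.inl h
      rcases eq_or_ne j k1 with h2 | h2
      · exact Or.inr (Or.inl h2)
      exact Or.inr (Or.inr (hc j h h2))
    have hcard := Finset.card_le_card hsub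
    have h3 : ({i, k1, k2} : Finset (Fin p)).card ≤ 3 := by
      refine le_trans (Finset.card_insert_le _ _) ?_
      have := Finset.card_insert_le k1 ({k2} : Finset (Fin p))
      simp only [Finset.card_singleton] at this
      omega
    rw [Finset.card_univ, Fintype.card_fin] at hcard
    omega
  have nReach_ne : ∀ q r : D, ¬ (G.induce D).Reachable q r → (↑q : V) ≠ ↑r := by
    intro q r hn h
    exact hn (Subtype.ext h ▸ SimpleGraph.Reachable.refl q)
  have nReach_nadj : ∀ q r : D, ¬ (G.induce D).Reachable q r → ¬ G.Adj ↑q ↑r := by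
    intro q r hn h
    exact hn (SimpleGraph.Adj.reachable (show (G.induce D).Adj q r from h))
  -- every pair reachable in the same component avoiding a far edge is adjacent
  have hclique : ∀ s t : D, (G.induce D).Adj s t →
      ∀ z w : D, ¬ (G.induce D).Reachable z s → (G.induce D).Reachable z w → z ≠ w →
        G.Adj ↑z ↑w := by
    intro s t hst z w hfar hzw hne
    by_contra hna
    have hna' : ¬ (G.induce D).Adj z w := hna
    obtain ⟨wk⟩ := hzw
    obtain ⟨a, b, c, hab, hbc, hnac, hnadjac, hra⟩ :=
      exists_trip (G.induce D) wk.length z w hne hna' wk le_rfl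
    have hrb : (G.induce D).Reachable z b := hra.trans hab.reachable
    have hrc : (G.induce D).Reachable z c := hrb.trans hbc.reachable
    have hfart : ¬ (G.induce D).Reachable z t := fun h => hfar (h.trans hst.symm.reachable)
    have noadjS : ∀ q : D, (G.induce D).Reachable z q → ¬ G.Adj ↑s ↑q ∧ (↑s : V) ≠ ↑q := by
      intro q hq
      have hqs : ¬ (G.induce D).Reachable q s := fun h => hfar (hq.trans h)
      exact ⟨fun h => (nReach_nadj q s hqs) h.symm, fun h => (nReach_ne q s hqs) h.symm⟩
    have noadjT : ∀ q : D, (G.induce D).Reachable z q → ¬ G.Adj ↑t ↑q ∧ (↑t : V) ≠ ↑q := by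
      intro q hq
      have hqt : ¬ (G.induce D).Reachable q t :=
        fun h => hfar ((hq.trans h).trans hst.symm.reachable)
      exact ⟨fun h => (nReach_nadj q t hqt) h.symm, fun h => (nReach_ne q t hqt) h.symm⟩
    exact noP2P3 hfree2 ↑s ↑t ↑a ↑b ↑c hst hab hbc
      (noadjS a hra).1 (noadjS b hrb).1 (noadjS c hrc).1
      (noadjT a hra).1 (noadjT b hrb).1 (noadjT c hrc).1
      hnadjac
      (noadjS a hra).2 (noadjS b hrb).2 (noadjS c hrc).2
      (noadjT a hra).2 (noadjT b hrb).2 (noadjT c hrc).2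
      (fun h => hnac (Subtype.ext h))
  constructor
  · intro v hv x y hxy hnvx hnvy hreach d hd hadj
    -- far edge from x
    obtain ⟨s, t, hst, hfar⟩ : ∃ s t : D, (G.induce D).Adj s t ∧ ¬ (G.induce D).Reachable x s := by
      by_cases h1 : (G.induce D).Reachable x x₁
      · exact ⟨x₂, y₂, he2, fun h => hnr (h1.symm.trans h)⟩
      · exact ⟨x₁, y₁, he1, h1⟩
    have hxysub : x ≠ y := fun h => hxy (congrArg _ h)
    have hxy' : G.Adj ↑x ↑y := hclique s t hst x y hfar hreach hxysub
    have memNi : ∀ e ∈ D, G.Adj v e → e ∈ N i := by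
      intro e he hadje
      rcases hmemUnion e he with h | h
      · obtain ⟨k, hk⟩ := Set.mem_iUnion.mp h
        by_cases hki : k = i
        · exact hki ▸ hk
        · exact absurd hadje.symm (hNanti k i hki e hk v hv)
      · exact absurd hadje.symm (hBanti e h i v hv)
    -- the case where v has a neighbour not reachable from x
    have farCase : ∀ e : D, G.Adj v ↑e → ¬ (G.induce D).Reachable x e → False := by
      intro ed hved hfared
      have hedNi : (↑ed : V) ∈ N i := memNi ↑ed ed.2 hved
      obtain ⟨kx, hkx⟩ := avoid ↑x x.2
      obtain ⟨ky, hky⟩ := avoid ↑y y.2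
      obtain ⟨j, hji, hj1, hj2⟩ := pick kx ky
      obtain ⟨u, hu⟩ := hAne j
      have hfaredy : ¬ (G.induce D).Reachable y ed := fun h => hfared (hreach.trans h)
      exact noP2P3 hfree2 ↑x ↑y ↑ed v u
        hxy' hved.symm ((hmulti i j v hv u hu).mpr (Ne.symm hji))
        (nReach_nadj x ed hfared)
        (fun h => hnvx h.symm)
        (hkx j hj1 u hu)
        (nReach_nadj y ed hfaredy)
        (fun h => hnvy h.symm)
        (hky j hj2 u hu)
        (hNanti i j (Ne.symm hji) ↑ed hedNi u hu)
        (nReach_ne x ed hfared)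
        (fun h => hAD i v hv (h ▸ x.2))
        (fun h => hAD j u hu (h ▸ x.2))
        (nReach_ne y ed hfaredy)
        (fun h => hAD i v hv (h ▸ y.2))
        (fun h => hAD j u hu (h ▸ y.2))
        (fun h => hAD j u hu (h ▸ ed.2))
    by_cases hrd : (G.induce D).Reachable x ⟨d, hd⟩
    · -- d is in the same component as x
      by_cases hvs : G.Adj v ↑s
      · exact farCase s hvs hfar
      by_cases hvt : G.Adj v ↑t
      · exact farCase t hvt (fun h => hfar (h.trans hst.symm.reachable))
      have hxd : x ≠ (⟨d, hd⟩ : D) := fun h => hnvx (by rw [h]; exact hadj)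
      have hxdadj : G.Adj ↑x d := hclique s t hst x ⟨d, hd⟩ hfar hrd hxd
      have hfards : ¬ (G.induce D).Reachable (⟨d, hd⟩ : D) s := fun h => hfar (hrd.trans h)
      have hfardt : ¬ (G.induce D).Reachable (⟨d, hd⟩ : D) t :=
        fun h => hfar ((hrd.trans h).trans hst.symm.reachable)
      have hfarxt : ¬ (G.induce D).Reachable x t := fun h => hfar (h.trans hst.symm.reachable)
      exact noP2P3 hfree2 ↑s ↑t ↑x d v
        hst hxdadj hadj.symm
        (fun h => (nReach_nadj x s hfar) h.symm)
        (fun h => (nReach_nadj ⟨d, hd⟩ s hfards) h.symm)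
        (fun h => hvs h.symm)
        (fun h => (nReach_nadj x t hfarxt) h.symm)
        (fun h => (nReach_nadj ⟨d, hd⟩ t hfardt) h.symm)
        (fun h => hvt h.symm)
        (fun h => hnvx h.symm)
        (fun h => (nReach_ne x s hfar) h.symm)
        (fun h => (nReach_ne ⟨d, hd⟩ s hfards) h.symm)
        (fun h => hAD i v hv (h ▸ s.2))
        (fun h => (nReach_ne x t hfarxt) h.symm)
        (fun h => (nReach_ne ⟨d, hd⟩ t hfardt) h.symm)
        (fun h => hAD i v hv (h ▸ t.2))
        (fun h => hAD i v hv (h ▸ x.2))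
    · exact farCase ⟨d, hd⟩ hadj hrd
  · intro v hv w hw hvD hwD
    by_contra hvw
    obtain ⟨kx, hkx⟩ := avoid ↑x₁ x₁.2
    obtain ⟨ky, hky⟩ := avoid ↑y₁ y₁.2
    obtain ⟨j, hji, hj1, hj2⟩ := pick kx ky
    obtain ⟨u, hu⟩ := hAne j
    exact noP2P3 hfree2 ↑x₁ ↑y₁ v u w
      he1
      ((hmulti i j v hv u hu).mpr (Ne.symm hji))
      ((hmulti j i u hu w hw).mpr hji)
      (fun h => hvD ↑x₁ x₁.2 h.symm)
      (hkx j hj1 u hu)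
      (fun h => hwD ↑x₁ x₁.2 h.symm)
      (fun h => hvD ↑y₁ y₁.2 h.symm)
      (hky j hj2 u hu)
      (fun h => hwD ↑y₁ y₁.2 h.symm)
      (fun h => (hmulti i i v hv w hw).mp h rfl)
      (fun h => hAD i v hv (h ▸ x₁.2))
      (fun h => hAD j u hu (h ▸ x₁.2))
      (fun h => hAD i w hw (h ▸ x₁.2))
      (fun h => hAD i v hv (h ▸ y₁.2))
      (fun h => hAD j u hu (h ▸ y₁.2))
      (fun h => hAD i w hw (h ▸ y₁.2))
      hvw
end
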